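/- arXiv:2001.07201 — 6 statements merged into one kernel-verified Lean document; each statement's English description precedes it below -/
import Mathlib

section
/- Let v₁, v₂, v₃, v₄ ∈ ℝ³ be nonzero vectors such that every three of them are linearly independent, and let W ⊆ ℝ³ be a 2-dimensional linear subspace containing none of v₁, v₂, v₃, v₄. Then there exists a linear automorphism g : W ≃ W such that g is not a scalar multiple of the identity, g ∘ g is a scalar multiple of the identity, and for every quadratic form Q on ℝ³ with Q(v₁) = Q(v₂) = Q(v₃) = Q(v₄) = 0 and every w ∈ W with Q(w) = 0, one also has Q(g(w)) = 0. -/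
/-!
Normalise the base points to a frame `u₀, u₁, u₂, u₀ + u₁ + u₂`. In the dual coordinates
`X, Y, Z` the conics through the frame are the pencil spanned by the line pairs `X (Y - Z)` and
`Z (Y - X)`, so on `W` they cut out the pencil of binary quadratics spanned by two products of
linear forms `A = ℓ₁ ℓ₂` and `C = ℓ₃ ℓ₄`. For any two binary quadratics `A, C` there is a matrix
`M` with `M² = Res(A, C) • 1` and `F ∘ M = Res(A, C) • F` for every `F` in their pencil. Here
`Res(A, C)` is the product of the four cross determinants `det(ℓᵢ, ℓⱼ)`, each of which is nonzero
because a common zero of `ℓᵢ` and `ℓⱼ` on `W` would be a base point on the line.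
-/

open Matrix LinearMap Module

namespace BinaryQuadratic

variable {K : Type*} [Field K]

def eval (a : Fin 3 → K) (x : Fin 2 → K) : K :=
  a 0 * x 0 ^ 2 + a 1 * (x 0 * x 1) + a 2 * x 1 ^ 2

def resultant (a c : Fin 3 → K) : K :=
  (a 0 * c 2 - a 2 * c 0) ^ 2 - (a 0 * c 1 - a 1 * c 0) * (a 1 * c 2 - a 2 * c 1)

/-- The entries are the `2 × 2` minors of the coefficient matrix with rows `a` and `c`; the matrix
sends a zero of any member of the pencil spanned by `a` and `c` to the other zero of that member,
up to scaling. -/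
def involutionMatrix (a c : Fin 3 → K) : Matrix (Fin 2) (Fin 2) K :=
  !![-(a 0 * c 2 - a 2 * c 0), -(a 1 * c 2 - a 2 * c 1);
    a 0 * c 1 - a 1 * c 0, a 0 * c 2 - a 2 * c 0]

theorem eval_involutionMatrix_mulVec_left (a c : Fin 3 → K) (x : Fin 2 → K) :
    eval a (involutionMatrix a c *ᵥ x) = resultant a c * eval a x := by
  simp only [eval, resultant, involutionMatrix, mulVec, vec2_dotProduct, of_apply, cons_val_zero,
    cons_val_one]
  ring

theorem eval_involutionMatrix_mulVec_right (a c : Fin 3 → K) (x : Fin 2 → K) :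
    eval c (involutionMatrix a c *ᵥ x) = resultant a c * eval c x := by
  simp only [eval, resultant, involutionMatrix, mulVec, vec2_dotProduct, of_apply, cons_val_zero,
    cons_val_one]
  ring

theorem involutionMatrix_mul_self (a c : Fin 3 → K) :
    involutionMatrix a c * involutionMatrix a c = resultant a c • 1 := by
  rw [involutionMatrix, mul_fin_two, one_fin_two, smul_of, resultant]
  simp only [smul_cons, smul_empty, smul_eq_mul, mul_one, mul_zero]
  exact congrArg of (vec2_eq (vec2_eq (by ring) (by ring)) (vec2_eq (by ring) (by ring)))

theorem det_involutionMatrix (a c : Fin 3 → K) :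
    (involutionMatrix a c).det = -resultant a c := by
  rw [involutionMatrix, det_fin_two_of, resultant]
  ring

theorem involutionMatrix_ne_smul_one (h2 : (2 : K) ≠ 0) {a c : Fin 3 → K}
    (hres : resultant a c ≠ 0) (k : K) : involutionMatrix a c ≠ k • 1 := by
  intro h
  rw [involutionMatrix, one_fin_two, smul_of] at h
  simp only [smul_cons, smul_empty, smul_eq_mul, mul_one, mul_zero, EmbeddingLike.apply_eq_iff_eq,
    vecCons_inj, and_true] at h
  obtain ⟨⟨h00, h01⟩, h10, h11⟩ := h
  have h02 : a 0 * c 2 - a 2 * c 0 = 0 := by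
    have : 2 * (a 0 * c 2 - a 2 * c 0) = 0 := by linear_combination h11 - h00
    exact (mul_eq_zero.mp this).resolve_left h2
  have h12 : a 1 * c 2 - a 2 * c 1 = 0 := by linear_combination -h01
  exact hres (by rw [resultant, h02, h12, h10]; ring)

def mulCoeffs (l m : Fin 2 → K) : Fin 3 → K :=
  ![l 0 * m 0, l 0 * m 1 + l 1 * m 0, l 1 * m 1]

theorem eval_mulCoeffs (l m x : Fin 2 → K) : eval (mulCoeffs l m) x = (l ⬝ᵥ x) * (m ⬝ᵥ x) := by
  simp only [eval, mulCoeffs, vec2_dotProduct, cons_val_zero, cons_val_one, cons_val_two, head_cons,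
    tail_cons]
  ring

theorem resultant_mulCoeffs (l₁ l₂ l₃ l₄ : Fin 2 → K) :
    resultant (mulCoeffs l₁ l₂) (mulCoeffs l₃ l₄) =
      (of ![l₁, l₃]).det * (of ![l₁, l₄]).det * ((of ![l₂, l₃]).det * (of ![l₂, l₄]).det) := by
  simp only [resultant, mulCoeffs, det_fin_two, of_apply, cons_val_zero, cons_val_one, cons_val_two,
    head_cons, tail_cons]
  ring

end BinaryQuadratic

section Line

open BinaryQuadratic

variable {K W : Type*} [Field K] [AddCommGroup W] [Module K W]

theorem Module.Basis.apply_eq_dotProduct_repr {ι : Type*} [Fintype ι] (e : Basis ι K W)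
    (ℓ : W →ₗ[K] K) (w : W) : ℓ w = (ℓ ∘ e) ⬝ᵥ e.repr w := calc
  ℓ w = ℓ (∑ i, e.repr w i • e i) := by rw [e.sum_repr]
  _ = _ := by simp only [map_sum, map_smul, smul_eq_mul, dotProduct, Function.comp_apply, mul_comm]

theorem det_ne_zero_of_disjoint_ker (e : Basis (Fin 2) K W) {ℓ ℓ' : W →ₗ[K] K}
    (h : Disjoint (ker ℓ) (ker ℓ')) : (of ![ℓ ∘ e, ℓ' ∘ e]).det ≠ 0 := by
  intro h0
  obtain ⟨x, hx, hMx⟩ := exists_mulVec_eq_zero_iff.mpr h0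
  set w := e.equivFun.symm x
  have hw : ⇑(e.repr w) = x := by rw [← e.equivFun_apply, e.equivFun.apply_symm_apply]
  have hℓ : ℓ w = 0 := by rw [e.apply_eq_dotProduct_repr, hw]; exact congrFun hMx 0
  have hℓ' : ℓ' w = 0 := by rw [e.apply_eq_dotProduct_repr, hw]; exact congrFun hMx 1
  have : w = 0 := Submodule.disjoint_def.mp h w hℓ hℓ'
  exact hx (by rw [← hw, this, map_zero, Finsupp.coe_zero])

theorem exists_involution_of_resultant_ne_zero (h2 : (2 : K) ≠ 0) (e : Basis (Fin 2) K W)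
    {A C : W → K} {a c : Fin 3 → K} (hA : ∀ w, A w = eval a (e.repr w))
    (hC : ∀ w, C w = eval c (e.repr w)) (hres : resultant a c ≠ 0) :
    ∃ g : W ≃ₗ[K] W, (¬ ∃ k : K, ∀ w, g w = k • w) ∧ (∃ k : K, ∀ w, g (g w) = k • w) ∧
      ∀ P R : K, ∀ w, P * A w + R * C w = 0 → P * A (g w) + R * C (g w) = 0 := by
  set M := involutionMatrix a c with hM
  have hdet : IsUnit M.det := by
    rw [hM, det_involutionMatrix]
    exact (neg_ne_zero.mpr hres).isUnit
  refine ⟨M.toLinearEquiv e hdet, ?_, ⟨resultant a c, fun w => ?_⟩, fun P R w hw => ?_⟩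
  · rintro ⟨k, hk⟩
    have hMk : toLin e e M = k • LinearMap.id := LinearMap.ext hk
    apply involutionMatrix_ne_smul_one h2 hres k
    rw [← hM, ← LinearMap.toMatrix_toLin e e M, hMk, map_smul, LinearMap.toMatrix_id]
  · rw [toLinearEquiv_apply, toLinearEquiv_apply, ← toLin_mul_apply, hM,
      involutionMatrix_mul_self, map_smul, toLin_one, LinearMap.smul_apply, LinearMap.id_apply]
  · rw [hA, hC] at hw
    rw [hA, hC, toLinearEquiv_apply, repr_toLin, hM, eval_involutionMatrix_mulVec_left,
      eval_involutionMatrix_mulVec_right]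
    linear_combination resultant a c * hw

theorem exists_involution_of_pencil (h2 : (2 : K) ≠ 0) (e : Basis (Fin 2) K W)
    (ℓ₁ ℓ₂ ℓ₃ ℓ₄ : W →ₗ[K] K) (h₁₃ : Disjoint (ker ℓ₁) (ker ℓ₃))
    (h₁₄ : Disjoint (ker ℓ₁) (ker ℓ₄)) (h₂₃ : Disjoint (ker ℓ₂) (ker ℓ₃))
    (h₂₄ : Disjoint (ker ℓ₂) (ker ℓ₄)) :
    ∃ g : W ≃ₗ[K] W, (¬ ∃ k : K, ∀ w, g w = k • w) ∧ (∃ k : K, ∀ w, g (g w) = k • w) ∧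
      ∀ P R : K, ∀ w, P * (ℓ₁ w * ℓ₂ w) + R * (ℓ₃ w * ℓ₄ w) = 0 →
        P * (ℓ₁ (g w) * ℓ₂ (g w)) + R * (ℓ₃ (g w) * ℓ₄ (g w)) = 0 := by
  have hprod : ∀ ℓ ℓ' : W →ₗ[K] K, ∀ w, ℓ w * ℓ' w = eval (mulCoeffs (ℓ ∘ e) (ℓ' ∘ e)) (e.repr w) :=
    fun ℓ ℓ' w => by rw [eval_mulCoeffs, ← e.apply_eq_dotProduct_repr, ← e.apply_eq_dotProduct_repr]
  refine exists_involution_of_resultant_ne_zero (A := fun w => ℓ₁ w * ℓ₂ w)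
    (C := fun w => ℓ₃ w * ℓ₄ w) h2 e (hprod ℓ₁ ℓ₂) (hprod ℓ₃ ℓ₄) ?_
  rw [resultant_mulCoeffs]
  exact mul_ne_zero (mul_ne_zero (det_ne_zero_of_disjoint_ker e h₁₃)
    (det_ne_zero_of_disjoint_ker e h₁₄)) (mul_ne_zero (det_ne_zero_of_disjoint_ker e h₂₃)
    (det_ne_zero_of_disjoint_ker e h₂₄))

end Line

section Frame

variable {K V : Type*} [Field K] [AddCommGroup V] [Module K V]

theorem Module.Basis.fin_three_expansion (u : Basis (Fin 3) K V) (v : V) :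
    v = u.coord 0 v • u 0 + u.coord 1 v • u 1 + u.coord 2 v • u 2 := by
  have := u.sum_repr v
  rw [Fin.sum_univ_three] at this
  exact this.symm

theorem LinearIndependent.smul_add_smul_ne {x y z : V} (h : LinearIndependent K ![x, y, z])
    (s t : K) : s • x + t • y ≠ z := by
  intro hz
  have := Fintype.linearIndependent_iff.mp h ![s, t, -1] (by
    rw [Fin.sum_univ_three]
    simp only [cons_val_zero, cons_val_one, cons_val_two, head_cons, tail_cons, neg_one_smul, hz]
    exact add_neg_cancel z)
  simpa using this 2

theorem exists_basis_smul_eq_and_sum_eq (hV : finrank K V = 3) {v₁ v₂ v₃ v₄ : V}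
    (h123 : LinearIndependent K ![v₁, v₂, v₃]) (h124 : LinearIndependent K ![v₁, v₂, v₄])
    (h134 : LinearIndependent K ![v₁, v₃, v₄]) (h234 : LinearIndependent K ![v₂, v₃, v₄]) :
    ∃ (u : Basis (Fin 3) K V) (c : Fin 3 → K), (∀ i, c i ≠ 0) ∧
      (∀ i, u i = c i • ![v₁, v₂, v₃] i) ∧ u 0 + u 1 + u 2 = v₄ := by
  let b := basisOfLinearIndependentOfCardEqFinrank h123 (by simp [hV])
  have hb : ⇑b = ![v₁, v₂, v₃] := coe_basisOfLinearIndependentOfCardEqFinrank _ _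
  have hv₄ := b.fin_three_expansion v₄
  simp only [hb, cons_val_zero, cons_val_one, cons_val_two, tail_cons, head_cons] at hv₄
  have hc : ∀ i, b.coord i v₄ ≠ 0 := by
    intro i
    fin_cases i <;> intro h0 <;> simp only [Fin.zero_eta, Fin.mk_one, Fin.reduceFinMk] at h0
    · refine h234.smul_add_smul_ne (b.coord 1 v₄) (b.coord 2 v₄) ?_
      conv_rhs => rw [hv₄, h0]
      module
    · refine h134.smul_add_smul_ne (b.coord 0 v₄) (b.coord 2 v₄) ?_
      conv_rhs => rw [hv₄, h0]
      module
    · refine h124.smul_add_smul_ne (b.coord 0 v₄) (b.coord 1 v₄) ?_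
      conv_rhs => rw [hv₄, h0]
      module
  refine ⟨b.isUnitSMul fun i => (hc i).isUnit, _, hc, fun i => by rw [b.isUnitSMul_apply, hb], ?_⟩
  simp only [b.isUnitSMul_apply, hb]
  exact hv₄.symm

theorem QuadraticMap.apply_smul_add_smul_add_smul_of_isotropic (Q : QuadraticForm K V)
    {a b c : V} (ha : Q a = 0) (hb : Q b = 0) (hc : Q c = 0) (x y z : K) :
    Q (x • a + y • b + z • c) =
      x * y * polar Q a b + y * z * polar Q b c + x * z * polar Q a c := by
  rw [QuadraticMap.map_add Q, QuadraticMap.map_add Q, QuadraticMap.map_smul, QuadraticMap.map_smul,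
    QuadraticMap.map_smul, ha, hb, hc, polar_add_left]
  simp only [polar_smul_left, polar_smul_right, smul_eq_mul]
  ring

theorem QuadraticMap.apply_eq_of_frame (Q : QuadraticForm K V) (u : Basis (Fin 3) K V)
    (hQu : ∀ i, Q (u i) = 0) (hQ : Q (u 0 + u 1 + u 2) = 0) (v : V) :
    Q v = polar Q (u 0) (u 1) * (u.coord 0 v * (u.coord 1 v - u.coord 2 v)) +
      polar Q (u 1) (u 2) * (u.coord 2 v * (u.coord 1 v - u.coord 0 v)) := by
  have hsum : polar Q (u 0) (u 1) + polar Q (u 1) (u 2) + polar Q (u 0) (u 2) = 0 := by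
    have := Q.apply_smul_add_smul_add_smul_of_isotropic (hQu 0) (hQu 1) (hQu 2) 1 1 1
    rwa [one_smul, one_smul, one_smul, hQ, one_mul, one_mul, one_mul, one_mul, eq_comm] at this
  conv_lhs => rw [u.fin_three_expansion v,
    Q.apply_smul_add_smul_add_smul_of_isotropic (hQu 0) (hQu 1) (hQu 2)]
  linear_combination (u.coord 0 v * u.coord 2 v) * hsum

theorem disjoint_ker_domRestrict_of_eq_smul {W : Submodule K V} {f f' : V →ₗ[K] K} {p : V}
    (hp : p ∉ W) (h : ∀ v, f v = 0 → f' v = 0 → ∃ k : K, v = k • p) :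
    Disjoint (ker (f.domRestrict W)) (ker (f'.domRestrict W)) := by
  refine Submodule.disjoint_def.mpr fun w hw hw' => ?_
  obtain ⟨k, hk⟩ := h w hw hw'
  by_cases hk0 : k = 0
  · exact Subtype.ext (by rw [hk, hk0, zero_smul, Submodule.coe_zero])
  · exact absurd ((Submodule.smul_mem_iff W hk0).mp (hk ▸ w.2)) hp

theorem Module.Basis.disjoint_ker_domRestrict_frame (u : Basis (Fin 3) K V) {W : Submodule K V}
    (hu : ∀ i, u i ∉ W) (hsum : u 0 + u 1 + u 2 ∉ W) :
    Disjoint (ker ((u.coord 0).domRestrict W)) (ker ((u.coord 2).domRestrict W)) ∧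
    Disjoint (ker ((u.coord 0).domRestrict W)) (ker ((u.coord 1 - u.coord 0).domRestrict W)) ∧
    Disjoint (ker ((u.coord 1 - u.coord 2).domRestrict W)) (ker ((u.coord 2).domRestrict W)) ∧
    Disjoint (ker ((u.coord 1 - u.coord 2).domRestrict W))
      (ker ((u.coord 1 - u.coord 0).domRestrict W)) := by
  refine ⟨disjoint_ker_domRestrict_of_eq_smul (hu 1) fun v hX hZ => ⟨u.coord 1 v, ?_⟩,
    disjoint_ker_domRestrict_of_eq_smul (hu 2) fun v hX hYX => ⟨u.coord 2 v, ?_⟩,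
    disjoint_ker_domRestrict_of_eq_smul (hu 0) fun v hYZ hZ => ⟨u.coord 0 v, ?_⟩,
    disjoint_ker_domRestrict_of_eq_smul hsum fun v hYZ hYX => ⟨u.coord 0 v, ?_⟩⟩
  all_goals conv_lhs => rw [u.fin_three_expansion v]
  · rw [hX, hZ]; module
  · rw [LinearMap.sub_apply, hX, sub_eq_zero] at hYX
    rw [hX, hYX]; module
  · rw [LinearMap.sub_apply, hZ, sub_eq_zero] at hYZ
    rw [hYZ, hZ]; module
  · rw [LinearMap.sub_apply, sub_eq_zero] at hYZ hYX
    rw [← hYZ, hYX]; module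

end Frame

theorem desargues_involution_real_general
    (v₁ v₂ v₃ v₄ : Fin 3 → ℝ)
    (h123 : LinearIndependent ℝ ![v₁, v₂, v₃])
    (h124 : LinearIndependent ℝ ![v₁, v₂, v₄])
    (h134 : LinearIndependent ℝ ![v₁, v₃, v₄])
    (h234 : LinearIndependent ℝ ![v₂, v₃, v₄])
    (W : Submodule ℝ (Fin 3 → ℝ)) (hW : Module.finrank ℝ W = 2)
    (hWv₁ : v₁ ∉ W) (hWv₂ : v₂ ∉ W) (hWv₃ : v₃ ∉ W) (hWv₄ : v₄ ∉ W) :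
    ∃ g : W ≃ₗ[ℝ] W,
      (¬ ∃ c : ℝ, ∀ w : W, g w = c • w) ∧
      (∃ c : ℝ, ∀ w : W, g (g w) = c • w) ∧
      (∀ Q : QuadraticForm ℝ (Fin 3 → ℝ),
        Q v₁ = 0 → Q v₂ = 0 → Q v₃ = 0 → Q v₄ = 0 →
        ∀ w : W, Q (w : Fin 3 → ℝ) = 0 → Q ((g w : W) : Fin 3 → ℝ) = 0) := by
  obtain ⟨u, c, hc, hu, hsum⟩ := exists_basis_smul_eq_and_sum_eq (by simp) h123 h124 h134 h234
  have huW : ∀ i, u i ∉ W := by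
    intro i
    rw [hu i, Submodule.smul_mem_iff W (hc i)]
    fin_cases i <;> assumption
  obtain ⟨h₁₃, h₁₄, h₂₃, h₂₄⟩ := u.disjoint_ker_domRestrict_frame huW (hsum ▸ hWv₄)
  obtain ⟨g, hg_ne, hg_sq, hg⟩ := exists_involution_of_pencil two_ne_zero
    (Module.finBasisOfFinrankEq ℝ W hW) _ _ _ _ h₁₃ h₁₄ h₂₃ h₂₄
  refine ⟨g, hg_ne, hg_sq, fun Q hQ₁ hQ₂ hQ₃ hQ₄ w hw => ?_⟩
  have hQu : ∀ i, Q (u i) = 0 := by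
    intro i
    rw [hu i, QuadraticMap.map_smul, smul_eq_zero]
    right
    fin_cases i <;> assumption
  rw [Q.apply_eq_of_frame u hQu (hsum ▸ hQ₄)] at hw ⊢
  exact hg _ _ w hw

/-- **Desargues' involution theorem, real projective plane version.**
Given four base points `[v₁], [v₂], [v₃], [v₄]` in general position in the real
projective plane and a line (2-dimensional subspace `W`) avoiding them, there is
an involution of the line (a linear automorphism `g` of `W`, not a scalar multiple
of the identity, whose square is a scalar multiple of the identity) such that every
conic through the four base points meets the line in a pair of points conjugate
under the involution: if `Q` vanishes at the base points and at `w ∈ W`, then `Q`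
also vanishes at `g w`. -/
theorem desargues_involution_real
    (v₁ v₂ v₃ v₄ : Fin 3 → ℝ)
    (hv₁ : v₁ ≠ 0) (hv₂ : v₂ ≠ 0) (hv₃ : v₃ ≠ 0) (hv₄ : v₄ ≠ 0)
    (h123 : LinearIndependent ℝ ![v₁, v₂, v₃])
    (h124 : LinearIndependent ℝ ![v₁, v₂, v₄])
    (h134 : LinearIndependent ℝ ![v₁, v₃, v₄])
    (h234 : LinearIndependent ℝ ![v₂, v₃, v₄])
    (W : Submodule ℝ (Fin 3 → ℝ)) (hW : Module.finrank ℝ W = 2)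
    (hWv₁ : v₁ ∉ W) (hWv₂ : v₂ ∉ W) (hWv₃ : v₃ ∉ W) (hWv₄ : v₄ ∉ W) :
    ∃ g : W ≃ₗ[ℝ] W,
      (¬ ∃ c : ℝ, ∀ w : W, g w = c • w) ∧
      (∃ c : ℝ, ∀ w : W, g (g w) = c • w) ∧
      (∀ Q : QuadraticForm ℝ (Fin 3 → ℝ),
        Q v₁ = 0 → Q v₂ = 0 → Q v₃ = 0 → Q v₄ = 0 →
        ∀ w : W, Q (w : Fin 3 → ℝ) = 0 → Q ((g w : W) : Fin 3 → ℝ) = 0) :=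
  desargues_involution_real_general v₁ v₂ v₃ v₄ h123 h124 h134 h234 W hW hWv₁ hWv₂ hWv₃ hWv₄
end

section
/- Let v₁, v₂, v₃, v₄ ∈ ℂ³ be nonzero vectors such that every three of them are linearly independent, and let W ⊆ ℂ³ be a 2-dimensional linear subspace containing none of v₁, v₂, v₃, v₄. Then there exists a linear automorphism g : W ≃ W such that: g is not a scalar multiple of the identity; g ∘ g is a scalar multiple of the identity; for every quadratic form Q on ℂ³ with Q(v₁) = Q(v₂) = Q(v₃) = Q(v₄) = 0 and every w ∈ W with Q(w) = 0, one also has Q(g(w)) = 0; g has two linearly independent eigenvectors spanning distinct eigenlines of W; and for every nonzero quadratic form Q on ℂ³ vanishing at v₁, v₂, v₃, v₄ there exists a nonzero w ∈ W with Q(w) = 0. -/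
/-!
Rescale the base points to the projective frame `e₀, e₁, e₂, e₀ + e₁ + e₂`. The conics through
the frame form the pencil spanned by the line pairs `x₀(x₁ - x₂)` and `x₂(x₁ - x₀)`, so on `W`
they cut out the pencil of binary quadratic forms spanned by two forms `q₁, q₂`. A traceless
matrix `M` built from the coefficients of `q₁, q₂` satisfies `M² = δ • 1` and
`qᵢ (M w) = δ * qᵢ w`, where `δ = -det M` is the resultant of `q₁` and `q₂`. For the frame pencil,
`det M` is the product of the four determinants `det (p, W)` over the base points `p`, nonzero
because `W` avoids them. Dividing `M` by a square root of `δ` gives the involution, and its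
`±1`-eigenvectors are its two fixed points. Every conic meets `W` simply because every binary
quadratic form over `ℂ` has a nontrivial zero.
-/

open Module QuadraticMap

section GeneralPosition

variable {K V : Type*} [Field K] [AddCommGroup V] [Module K V]

theorem ne_zero_of_eq_smul_add_smul_add_smul {x y z w : V} {a b c : K}
    (hw : w = a • x + b • y + c • z) (h : LinearIndependent K ![y, z, w]) : a ≠ 0 := by
  rintro rfl
  have := Fintype.linearIndependent_iff.1 h ![-b, -c, 1]
    (by simp only [Fin.sum_univ_three, Matrix.cons_val, hw]; module) 2
  simp at this

theorem exists_basis_smul_of_linearIndependent (hV : finrank K V = 3) {v₁ v₂ v₃ v₄ : V}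
    (h123 : LinearIndependent K ![v₁, v₂, v₃]) (h124 : LinearIndependent K ![v₁, v₂, v₄])
    (h134 : LinearIndependent K ![v₁, v₃, v₄]) (h234 : LinearIndependent K ![v₂, v₃, v₄]) :
    ∃ (e : Basis (Fin 3) K V) (c : Fin 3 → K),
      (∀ i, c i ≠ 0 ∧ e i = c i • ![v₁, v₂, v₃] i) ∧ ∑ i, e i = v₄ := by
  let B := basisOfLinearIndependentOfCardEqFinrank h123 (by simp [hV])
  have hB : ∀ i, B i = ![v₁, v₂, v₃] i := by simp [B]
  set c := B.repr v₄
  have hv₄ : v₄ = c 0 • v₁ + c 1 • v₂ + c 2 • v₃ := by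
    simpa [Fin.sum_univ_three, hB] using (B.sum_repr v₄).symm
  have hc : ∀ i, c i ≠ 0 := by
    intro i
    fin_cases i
    · exact ne_zero_of_eq_smul_add_smul_add_smul hv₄ h234
    · exact ne_zero_of_eq_smul_add_smul_add_smul
        (show v₄ = c 1 • v₂ + c 0 • v₁ + c 2 • v₃ by rw [hv₄]; abel) h134
    · exact ne_zero_of_eq_smul_add_smul_add_smul
        (show v₄ = c 2 • v₃ + c 0 • v₁ + c 1 • v₂ by rw [hv₄]; abel) h124
  refine ⟨B.unitsSMul fun i => Units.mk0 (c i) (hc i), c, fun i => ⟨hc i, ?_⟩, ?_⟩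
  · simp [Basis.unitsSMul_apply, hB]
  · simp only [Basis.unitsSMul_apply]
    exact B.sum_repr v₄

theorem Module.Basis.det_cons_ne_zero_of_notMem {n : ℕ} (e : Basis (Fin (n + 1)) K V)
    {W : Submodule K V} (b : Basis (Fin n) K W) {p : V} (hp : p ∉ W) :
    e.det (Fin.cons p (W.subtype ∘ b)) ≠ 0 := by
  have hli : LinearIndependent K (Fin.cons p (W.subtype ∘ b) : Fin (n + 1) → V) :=
    linearIndependent_finCons.2 ⟨b.linearIndependent.map' _ W.ker_subtype,
      fun h => hp (Submodule.span_le.2 (by rintro _ ⟨i, rfl⟩; exact (b i).2) h)⟩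
  rw [← isUnit_iff_ne_zero, ← e.is_basis_iff_det]
  exact ⟨hli, hli.span_eq_top_of_card_eq_finrank (by simp [finrank_eq_card_basis e])⟩

end GeneralPosition

section BinaryPencil

variable {K W : Type*} [Field K] [AddCommGroup W] [Module K W]

theorem QuadraticMap.exists_ne_zero_apply_eq_zero [IsAlgClosed K] [NeZero (2 : K)]
    (Q : QuadraticForm K W) {f : Fin 2 → W} (hf : LinearIndependent K f) :
    ∃ w, w ≠ 0 ∧ Q w = 0 := by
  obtain ⟨hf₁, hf₀⟩ := linearIndependent_fin2.1 hf
  by_cases h : Q (f 1) = 0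
  · exact ⟨f 1, hf₁, h⟩
  obtain ⟨s, hs⟩ := IsAlgClosed.exists_pow_nat_eq
    (discrim (Q (f 1)) (polar Q (f 1) (f 0)) (Q (f 0))) two_pos
  obtain ⟨t, ht⟩ := exists_quadratic_eq_zero (b := polar Q (f 1) (f 0)) (c := Q (f 0)) h
    ⟨s, by rw [← pow_two, hs]⟩
  refine ⟨t • f 1 + f 0, fun h0 => hf₀ (-t) ?_, ?_⟩
  · rwa [neg_smul, neg_eq_iff_add_eq_zero]
  · rw [QuadraticMap.map_add (⇑Q), QuadraticMap.map_smul, polar_smul_left, smul_eq_mul,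
      smul_eq_mul]
    linear_combination ht

theorem exists_linearIndependent_eigenvectors_of_involutive [NeZero (2 : K)] {S : W →ₗ[K] W}
    (hS : Function.Involutive S) (hS' : ¬∃ c : K, ∀ w, S w = c • w) :
    ∃ w₁ w₂ : W, LinearIndependent K ![w₁, w₂] ∧ S w₁ = w₁ ∧ S w₂ = -w₂ := by
  push Not at hS'
  obtain ⟨x, hx⟩ := hS' (-1)
  obtain ⟨y, hy⟩ := hS' 1
  have hSx : S (x + S x) = x + S x := by simp [hS x, add_comm]
  have hSy : S (y - S y) = -(y - S y) := by simp [hS y]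
  refine ⟨_, _, linearIndependent_fin2.2 ⟨?_, fun a ha => ?_⟩, hSx, hSy⟩
  · exact sub_ne_zero.2 fun h => hy (by rw [← h, one_smul])
  · simp only [Matrix.cons_val_one, Matrix.cons_val_zero] at ha
    have h : x + S x = -(x + S x) := by
      conv_lhs => rw [← hSx, ← ha, map_smul, hSy, smul_neg, ha]
    have h2 : (2 : K) • (x + S x) = 0 := by
      rw [two_smul]
      nth_rewrite 2 [h]
      exact add_neg_cancel _
    have h0 : x + S x = 0 := (smul_eq_zero.1 h2).resolve_left two_ne_zero
    exact hx (by rw [neg_one_smul]; exact (neg_eq_of_add_eq_zero_right h0).symm)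

variable (b : Basis (Fin 2) K W)

theorem QuadraticMap.apply_eq_of_basis_fin_two (q : QuadraticForm K W) (w : W) :
    q w = q (b 0) * b.repr w 0 ^ 2 + polar q (b 0) (b 1) * (b.repr w 0 * b.repr w 1)
      + q (b 1) * b.repr w 1 ^ 2 := by
  obtain ⟨x, rfl⟩ := b.equivFun.symm.surjective w
  simp [Fin.sum_univ_two, QuadraticMap.map_add (⇑q), polar_smul_left, polar_smul_right,
    QuadraticMap.map_smul]
  ring

theorem not_exists_toLin_eq_smul_of_trace_eq_zero [NeZero (2 : K)]
    {N : Matrix (Fin 2) (Fin 2) K} (htr : N.trace = 0) (hN : N * N = 1) :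
    ¬∃ c : K, ∀ w, Matrix.toLin b b N w = c • w := by
  rintro ⟨c, hc⟩
  have hNc : N = c • 1 := (Matrix.toLin b b).injective <| by
    ext w; simp [hc]
  have hc0 : c = 0 := by
    simpa [hNc, Matrix.trace_fin_two, two_ne_zero] using htr
  simp [hNc, hc0] at hN

-- The involution whose fixed points are the zeros of the Jacobian `∂(q₁, q₂)/∂(s, t)`; its entries
-- form the cross product of the coefficient vectors `(qᵢ (b 0), polar qᵢ (b 0) (b 1), qᵢ (b 1))`.
noncomputable def pencilInvolutionMatrix (q₁ q₂ : QuadraticForm K W) :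
    Matrix (Fin 2) (Fin 2) K :=
  let a₁ := q₁ (b 0); let b₁ := polar q₁ (b 0) (b 1); let c₁ := q₁ (b 1)
  let a₂ := q₂ (b 0); let b₂ := polar q₂ (b 0) (b 1); let c₂ := q₂ (b 1)
  !![c₁ * a₂ - a₁ * c₂, c₁ * b₂ - b₁ * c₂; a₁ * b₂ - b₁ * a₂, a₁ * c₂ - c₁ * a₂]

variable (q₁ q₂ : QuadraticForm K W)

theorem trace_pencilInvolutionMatrix : (pencilInvolutionMatrix b q₁ q₂).trace = 0 := by
  simp [pencilInvolutionMatrix, Matrix.trace_fin_two]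

theorem pencilInvolutionMatrix_mul_self :
    pencilInvolutionMatrix b q₁ q₂ * pencilInvolutionMatrix b q₁ q₂ =
      -(pencilInvolutionMatrix b q₁ q₂).det • 1 := by
  ext i j
  fin_cases i <;> fin_cases j <;> simp [pencilInvolutionMatrix, Matrix.det_fin_two] <;> ring

theorem apply_toLin_pencilInvolutionMatrix (d e : K) (w : W) :
    (d • q₁ + e • q₂) (Matrix.toLin b b (pencilInvolutionMatrix b q₁ q₂) w) =
      -(pencilInvolutionMatrix b q₁ q₂).det * (d • q₁ + e • q₂) w := by
  set T := Matrix.toLin b b (pencilInvolutionMatrix b q₁ q₂)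
  simp only [add_apply, smul_apply, smul_eq_mul]
  rw [q₁.apply_eq_of_basis_fin_two b w, q₂.apply_eq_of_basis_fin_two b w,
    q₁.apply_eq_of_basis_fin_two b (T w), q₂.apply_eq_of_basis_fin_two b (T w), Matrix.repr_toLin]
  simp only [pencilInvolutionMatrix, Matrix.det_fin_two, Matrix.mulVec, dotProduct,
    Fin.sum_univ_two, Matrix.of_apply, Matrix.cons_val', Matrix.cons_val_fin_one,
    Matrix.cons_val_zero, Matrix.cons_val_one]
  ring

theorem exists_involutive_preserving_pencil [IsAlgClosed K] [NeZero (2 : K)]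
    (h : (pencilInvolutionMatrix b q₁ q₂).det ≠ 0) :
    ∃ S : W →ₗ[K] W, Function.Involutive S ∧ (¬∃ c : K, ∀ w, S w = c • w) ∧
      ∀ (d e : K) (w : W), (d • q₁ + e • q₂) (S w) = (d • q₁ + e • q₂) w := by
  set M := pencilInvolutionMatrix b q₁ q₂
  obtain ⟨ρ, hρ⟩ := IsAlgClosed.exists_pow_nat_eq (-M.det) two_pos
  have hρ0 : ρ ≠ 0 := by
    rintro rfl
    exact h (by simpa [eq_comm] using hρ)
  have hN : (ρ⁻¹ • M) * (ρ⁻¹ • M) = 1 := by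
    rw [smul_mul_smul_comm, pencilInvolutionMatrix_mul_self, ← hρ, smul_smul,
      show ρ⁻¹ * ρ⁻¹ * ρ ^ 2 = 1 by field_simp, one_smul]
  refine ⟨Matrix.toLin b b (ρ⁻¹ • M), fun w => ?_,
    not_exists_toLin_eq_smul_of_trace_eq_zero b ?_ hN, fun d e w => ?_⟩
  · rw [← LinearMap.comp_apply, ← Matrix.toLin_mul, hN, Matrix.toLin_one, LinearMap.id_apply]
  · rw [Matrix.trace_smul, trace_pencilInvolutionMatrix, smul_zero]
  · rw [map_smul, LinearMap.smul_apply, QuadraticMap.map_smul, apply_toLin_pencilInvolutionMatrix,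
      ← hρ, smul_eq_mul]
    field_simp

end BinaryPencil

section FrameConics

variable {K V : Type*} [Field K] [AddCommGroup V] [Module K V] (e : Basis (Fin 3) K V)

-- The line pairs `e₁e₂ ∪ e₀s` and `e₀e₁ ∪ e₂s` through the frame, where `s = ∑ i, e i`.
noncomputable def frameConic₁ : QuadraticForm K V :=
  linMulLin (e.coord 0) (e.coord 1 - e.coord 2)

noncomputable def frameConic₂ : QuadraticForm K V :=
  linMulLin (e.coord 2) (e.coord 1 - e.coord 0)

theorem eq_smul_frameConic₁_add_smul_frameConic₂ (Q : QuadraticForm K V)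
    (hQ : ∀ i, Q (e i) = 0) (hs : Q (∑ i, e i) = 0) :
    Q = polar Q (e 0) (e 1) • frameConic₁ e + polar Q (e 1) (e 2) • frameConic₂ e := by
  have hpolar : polar Q (e 0) (e 2) = -polar Q (e 0) (e 1) - polar Q (e 1) (e 2) := by
    simp only [Fin.sum_univ_three, QuadraticMap.map_add (⇑Q), polar_add_left, hQ, add_zero,
      zero_add] at hs
    linear_combination hs
  ext w
  obtain ⟨x, rfl⟩ := e.equivFun.symm.surjective w
  simp [Fin.sum_univ_three, QuadraticMap.map_add (⇑Q), polar_add_left, polar_smul_left,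
    polar_smul_right, QuadraticMap.map_smul, hQ, frameConic₁, frameConic₂, linMulLin_apply, hpolar]
  ring

theorem det_pencilInvolutionMatrix_frameConic {W : Submodule K V} (b : Basis (Fin 2) K W) :
    (pencilInvolutionMatrix b ((frameConic₁ e).comp W.subtype)
        ((frameConic₂ e).comp W.subtype)).det =
      e.det (Fin.cons (e 0) (W.subtype ∘ b)) * e.det (Fin.cons (e 1) (W.subtype ∘ b)) *
        e.det (Fin.cons (e 2) (W.subtype ∘ b)) * e.det (Fin.cons (∑ i, e i) (W.subtype ∘ b)) := by
  have hcons : ∀ p, (Fin.cons p (W.subtype ∘ b) : Fin 3 → V) = ![p, b 0, b 1] := fun p => by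
    ext i; fin_cases i <;> rfl
  simp only [hcons]
  simp [pencilInvolutionMatrix, frameConic₁, frameConic₂, Matrix.det_fin_two,
    Matrix.det_fin_three, Basis.det_apply, Basis.toMatrix_apply, polar, linMulLin_apply,
    Fin.sum_univ_three]
  ring

theorem det_pencilInvolutionMatrix_frameConic_ne_zero {W : Submodule K V} (b : Basis (Fin 2) K W)
    (he : ∀ i, e i ∉ W) (hs : ∑ i, e i ∉ W) :
    (pencilInvolutionMatrix b ((frameConic₁ e).comp W.subtype)
        ((frameConic₂ e).comp W.subtype)).det ≠ 0 := by
  have hdet {p} (hp : p ∉ W) := e.det_cons_ne_zero_of_notMem b hp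
  rw [det_pencilInvolutionMatrix_frameConic]
  exact mul_ne_zero (mul_ne_zero (mul_ne_zero (hdet (he 0)) (hdet (he 1))) (hdet (he 2))) (hdet hs)

end FrameConics

theorem desargues_involution_complex_general
    (v₁ v₂ v₃ v₄ : Fin 3 → ℂ)
    (h123 : LinearIndependent ℂ ![v₁, v₂, v₃])
    (h124 : LinearIndependent ℂ ![v₁, v₂, v₄])
    (h134 : LinearIndependent ℂ ![v₁, v₃, v₄])
    (h234 : LinearIndependent ℂ ![v₂, v₃, v₄])
    (W : Submodule ℂ (Fin 3 → ℂ)) (hW : Module.finrank ℂ W = 2)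
    (hWv₁ : v₁ ∉ W) (hWv₂ : v₂ ∉ W) (hWv₃ : v₃ ∉ W) (hWv₄ : v₄ ∉ W) :
    ∃ g : W ≃ₗ[ℂ] W,
      (¬ ∃ c : ℂ, ∀ w : W, g w = c • w) ∧
      (∃ c : ℂ, ∀ w : W, g (g w) = c • w) ∧
      (∀ Q : QuadraticForm ℂ (Fin 3 → ℂ),
        Q v₁ = 0 → Q v₂ = 0 → Q v₃ = 0 → Q v₄ = 0 →
        ∀ w : W, Q (w : Fin 3 → ℂ) = 0 → Q ((g w : W) : Fin 3 → ℂ) = 0) ∧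
      (∃ w₁ w₂ : W, LinearIndependent ℂ ![w₁, w₂] ∧
        (∃ c₁ : ℂ, g w₁ = c₁ • w₁) ∧ (∃ c₂ : ℂ, g w₂ = c₂ • w₂) ∧
        Submodule.span ℂ ({w₁} : Set W) ≠ Submodule.span ℂ ({w₂} : Set W)) ∧
      (∀ Q : QuadraticForm ℂ (Fin 3 → ℂ), Q ≠ 0 →
        Q v₁ = 0 → Q v₂ = 0 → Q v₃ = 0 → Q v₄ = 0 →
        ∃ w : W, w ≠ 0 ∧ Q (w : Fin 3 → ℂ) = 0) := by
  obtain ⟨e, c, he, hsum⟩ := exists_basis_smul_of_linearIndependent (by simp) h123 h124 h134 h234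
  have heW : ∀ i, e i ∉ W := by
    intro i
    rw [(he i).2, W.smul_mem_iff (he i).1]
    fin_cases i <;> assumption
  let b := Module.finBasisOfFinrankEq ℂ W hW
  obtain ⟨S, hS, hS_scalar, hS_pencil⟩ := exists_involutive_preserving_pencil b _ _
    (det_pencilInvolutionMatrix_frameConic_ne_zero e b heW (hsum ▸ hWv₄))
  refine ⟨LinearEquiv.ofInvolutive S hS, hS_scalar, ⟨1, fun w => by simp [hS w]⟩, ?_, ?_, ?_⟩
  · intro Q h₁ h₂ h₃ h₄ w hw
    have hQe : ∀ i, Q (e i) = 0 := by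
      intro i
      rw [(he i).2, QuadraticMap.map_smul]
      fin_cases i <;> simp [h₁, h₂, h₃]
    obtain ⟨d, d', rfl⟩ : ∃ d d' : ℂ, Q = d • frameConic₁ e + d' • frameConic₂ e :=
      ⟨_, _, eq_smul_frameConic₁_add_smul_frameConic₂ e Q hQe (hsum ▸ h₄)⟩
    exact (hS_pencil d d' w).trans hw
  · obtain ⟨w₁, w₂, hli, h₁, h₂⟩ := exists_linearIndependent_eigenvectors_of_involutive hS hS_scalar
    refine ⟨w₁, w₂, hli, ⟨1, h₁.trans (one_smul ℂ w₁).symm⟩,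
      ⟨-1, h₂.trans (neg_one_smul ℂ w₂).symm⟩, fun h => ?_⟩
    obtain ⟨a, ha⟩ := Submodule.mem_span_singleton.1 (h ▸ Submodule.mem_span_singleton_self w₁)
    exact (linearIndependent_fin2.1 hli).2 a ha
  · intro Q _ _ _ _ _
    exact (Q.comp W.subtype).exists_ne_zero_apply_eq_zero b.linearIndependent

/-- **Desargues' involution theorem, complex projective plane version.**
Given four base points in general position in the complex projective plane and a
line (2-dimensional subspace `W` of `ℂ³`) avoiding them, there is an involution
of the line (a linear automorphism `g` of `W`, not a scalar multiple of the
identity, whose square is a scalar multiple of the identity) such that every conic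
through the four base points meets the line in a pair of conjugate points;
moreover `g` has two linearly independent eigenvectors spanning distinct
eigenlines (the two fixed points of the involution), and every conic through the
four base points actually meets the line. -/
theorem desargues_involution_complex
    (v₁ v₂ v₃ v₄ : Fin 3 → ℂ)
    (hv₁ : v₁ ≠ 0) (hv₂ : v₂ ≠ 0) (hv₃ : v₃ ≠ 0) (hv₄ : v₄ ≠ 0)
    (h123 : LinearIndependent ℂ ![v₁, v₂, v₃])
    (h124 : LinearIndependent ℂ ![v₁, v₂, v₄])
    (h134 : LinearIndependent ℂ ![v₁, v₃, v₄])
    (h234 : LinearIndependent ℂ ![v₂, v₃, v₄])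
    (W : Submodule ℂ (Fin 3 → ℂ)) (hW : Module.finrank ℂ W = 2)
    (hWv₁ : v₁ ∉ W) (hWv₂ : v₂ ∉ W) (hWv₃ : v₃ ∉ W) (hWv₄ : v₄ ∉ W) :
    ∃ g : W ≃ₗ[ℂ] W,
      (¬ ∃ c : ℂ, ∀ w : W, g w = c • w) ∧
      (∃ c : ℂ, ∀ w : W, g (g w) = c • w) ∧
      (∀ Q : QuadraticForm ℂ (Fin 3 → ℂ),
        Q v₁ = 0 → Q v₂ = 0 → Q v₃ = 0 → Q v₄ = 0 →
        ∀ w : W, Q (w : Fin 3 → ℂ) = 0 → Q ((g w : W) : Fin 3 → ℂ) = 0) ∧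
      (∃ w₁ w₂ : W, LinearIndependent ℂ ![w₁, w₂] ∧
        (∃ c₁ : ℂ, g w₁ = c₁ • w₁) ∧ (∃ c₂ : ℂ, g w₂ = c₂ • w₂) ∧
        Submodule.span ℂ ({w₁} : Set W) ≠ Submodule.span ℂ ({w₂} : Set W)) ∧
      (∀ Q : QuadraticForm ℂ (Fin 3 → ℂ), Q ≠ 0 →
        Q v₁ = 0 → Q v₂ = 0 → Q v₃ = 0 → Q v₄ = 0 →
        ∃ w : W, w ≠ 0 ∧ Q (w : Fin 3 → ℂ) = 0) :=
  desargues_involution_complex_general v₁ v₂ v₃ v₄ h123 h124 h134 h234 W hW hWv₁ hWv₂ hWv₃ hWv₄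
end

section
/- Let A, B, C, D ∈ ℝ² with no three collinear, let u ∈ ℝ² be nonzero, M ∈ ℝ², and let ℓ = {M + t·u : t ∈ ℝ} be a line containing none of A, B, C, D. Suppose there is a conic f₁ through A, B, C, D and a constant c ≠ 0 with f₁(M + t·u) = c·t² for all t ∈ ℝ (f₁ is tangent to ℓ at M), and a conic f₂ through A, B, C, D and a t₀ ≠ 0 with f₂(M + t₀·u) = 0 and f₂(M − t₀·u) = 0 (f₂ meets ℓ in two points whose midpoint is M). Then for every conic f through A, B, C, D, the set {t ∈ ℝ : f(M + t·u) = 0} is either empty, or equal to {0}, or equal to {t₁, −t₁} for some t₁ ≠ 0. -/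
/-!
The conics through four points, no three collinear, form a pencil: the evaluation map at the
four points is onto (a product of two lines vanishes at three of them but not at the fourth), so
its kernel is two-dimensional. Since `f₁` and `f₂` are independent (compare them at `M + t₀ • u`),
every `f` of the family is `α f₁ + β f₂`. The zeros `±t₀` kill the linear term of `f₂` along
`ℓ`, so `t ↦ f (M + t • u)` is the even quadratic `(α c + β Q) t² + β f₂(M)`, whose zero set has
one of the three shapes, unless it is identically zero. That cannot happen: a conic vanishing on
`ℓ` is `ℓ` times a line, and that line would contain the non-collinear points `A`, `B`, `C`.
-/

/-- A conic (possibly degenerate) in the affine plane `ℝ × ℝ`, given by the six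
coefficients of a polynomial `a·x² + b·x·y + c·y² + d·x + e·y + g`. -/
structure Conic where
  a : ℝ
  b : ℝ
  c : ℝ
  d : ℝ
  e : ℝ
  g : ℝ

/-- Evaluation of the defining polynomial of a conic at a point of `ℝ × ℝ`. -/
def Conic.eval (f : Conic) (p : ℝ × ℝ) : ℝ :=
  f.a * p.1 ^ 2 + f.b * p.1 * p.2 + f.c * p.2 ^ 2 + f.d * p.1 + f.e * p.2 + f.g

/-- The defining polynomial is nonzero. -/
def Conic.Nonzero (f : Conic) : Prop :=
  ¬ (f.a = 0 ∧ f.b = 0 ∧ f.c = 0 ∧ f.d = 0 ∧ f.e = 0 ∧ f.g = 0)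

/-- The conic passes through the four points `A`, `B`, `C`, `D`. -/
def Conic.Through (f : Conic) (A B C D : ℝ × ℝ) : Prop :=
  f.eval A = 0 ∧ f.eval B = 0 ∧ f.eval C = 0 ∧ f.eval D = 0

/-- No three of the four points `A`, `B`, `C`, `D` are collinear. -/
def NoThreeCollinear (A B C D : ℝ × ℝ) : Prop :=
  ¬ Collinear ℝ ({A, B, C} : Set (ℝ × ℝ)) ∧ ¬ Collinear ℝ ({A, B, D} : Set (ℝ × ℝ)) ∧
  ¬ Collinear ℝ ({A, C, D} : Set (ℝ × ℝ)) ∧ ¬ Collinear ℝ ({B, C, D} : Set (ℝ × ℝ))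

/-- The line through `M` with direction `u`. -/
def parmLine (M u : ℝ × ℝ) : Set (ℝ × ℝ) :=
  {p | ∃ t : ℝ, p = M + t • u}

open Matrix

def affineEval (l : Fin 3 → ℝ) (X : ℝ × ℝ) : ℝ := l 0 * X.1 + l 1 * X.2 + l 2

def lineThrough (P Q : ℝ × ℝ) : Fin 3 → ℝ := ![P.2 - Q.2, Q.1 - P.1, P.1 * Q.2 - Q.1 * P.2]

lemma affineEval_lineThrough (P Q X : ℝ × ℝ) :
    affineEval (lineThrough P Q) X = (Q.1 - P.1) * (X.2 - P.2) - (Q.2 - P.2) * (X.1 - P.1) := by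
  simp only [affineEval, lineThrough, Matrix.cons_val]
  ring

lemma affineEval_lineThrough_left (P Q : ℝ × ℝ) : affineEval (lineThrough P Q) P = 0 := by
  rw [affineEval_lineThrough]; ring

lemma affineEval_lineThrough_right (P Q : ℝ × ℝ) : affineEval (lineThrough P Q) Q = 0 := by
  rw [affineEval_lineThrough]; ring

lemma fst_sq_add_snd_sq_ne_zero {u : ℝ × ℝ} (hu : u ≠ 0) : u.1 ^ 2 + u.2 ^ 2 ≠ 0 := by
  rw [sq, sq]
  exact fun h => hu (Prod.ext_iff.mpr (mul_self_add_mul_self_eq_zero.mp h))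

lemma mem_parmLine_of_affineEval_lineThrough_eq_zero {M u X : ℝ × ℝ} (hu : u ≠ 0)
    (h : affineEval (lineThrough M (M + u)) X = 0) : X ∈ parmLine M u := by
  have hn := fst_sq_add_snd_sq_ne_zero hu
  simp only [affineEval_lineThrough, Prod.fst_add, Prod.snd_add, add_sub_cancel_left] at h
  refine ⟨(u.1 * (X.1 - M.1) + u.2 * (X.2 - M.2)) / (u.1 ^ 2 + u.2 ^ 2), ?_⟩
  ext <;> simp only [Prod.fst_add, Prod.snd_add, Prod.smul_fst, Prod.smul_snd, smul_eq_mul] <;>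
    field_simp
  · linear_combination (-u.2) * h
  · linear_combination u.1 * h

lemma collinear_of_affineEval_lineThrough_eq_zero {P Q X : ℝ × ℝ}
    (h : affineEval (lineThrough P Q) X = 0) : Collinear ℝ ({X, P, Q} : Set (ℝ × ℝ)) := by
  rcases eq_or_ne Q P with rfl | hQP
  · rw [Set.pair_eq_singleton]
    exact collinear_pair ℝ X Q
  · rw [← add_sub_cancel P Q] at h
    obtain ⟨t, rfl⟩ := mem_parmLine_of_affineEval_lineThrough_eq_zero (sub_ne_zero.mpr hQP) h
    apply collinear_insert_of_mem_affineSpan_pair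
    have hmem := AffineMap.lineMap_mem_affineSpan_pair (k := ℝ) t P Q
    rwa [AffineMap.lineMap_apply, vsub_eq_sub, vadd_eq_add, add_comm] at hmem

lemma affineEval_eq_zero_of_not_collinear {l : Fin 3 → ℝ} {P Q R : ℝ × ℝ}
    (hPQR : ¬ Collinear ℝ ({P, Q, R} : Set (ℝ × ℝ)))
    (hP : affineEval l P = 0) (hQ : affineEval l Q = 0) (hR : affineEval l R = 0) : l = 0 := by
  have hcross : affineEval (lineThrough Q R) P ≠ 0 :=
    fun h => hPQR (collinear_of_affineEval_lineThrough_eq_zero h)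
  rw [affineEval_lineThrough] at hcross
  simp only [affineEval] at hP hQ hR
  have h0 : l 0 = 0 := by
    refine (mul_eq_zero.mp ?_).resolve_right hcross
    linear_combination (Q.2 - R.2) * hP + (P.2 - Q.2) * hR + (R.2 - P.2) * hQ
  have h1 : l 1 = 0 := by
    refine (mul_eq_zero.mp ?_).resolve_right hcross
    linear_combination (R.1 - Q.1) * hP + (Q.1 - P.1) * hR + (P.1 - R.1) * hQ
  have h2 : l 2 = 0 := by linear_combination hP - P.1 * h0 - P.2 * h1
  ext i
  fin_cases i <;> assumption

namespace Conic

def mulAffine (l m : Fin 3 → ℝ) : Conic where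
  a := l 0 * m 0
  b := l 0 * m 1 + l 1 * m 0
  c := l 1 * m 1
  d := l 0 * m 2 + l 2 * m 0
  e := l 1 * m 2 + l 2 * m 1
  g := l 2 * m 2

lemma eval_mulAffine (l m : Fin 3 → ℝ) (X : ℝ × ℝ) :
    (mulAffine l m).eval X = affineEval l X * affineEval m X := by
  simp only [eval, mulAffine, affineEval]
  ring

lemma Nonzero.exists_eval_ne_zero {f : Conic} (hf : f.Nonzero) : ∃ X, f.eval X ≠ 0 := by
  contrapose! hf
  have h₀ := hf (0, 0)
  have h₁ := hf (1, 0)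
  have h₂ := hf (-1, 0)
  have h₃ := hf (0, 1)
  have h₄ := hf (0, -1)
  have h₅ := hf (1, 1)
  simp only [eval] at h₀ h₁ h₂ h₃ h₄ h₅
  norm_num at h₀ h₁ h₂ h₃ h₄ h₅
  exact fun hne => hne ⟨by linarith, by linarith, by linarith, by linarith, by linarith, by linarith⟩

def quadPart (f : Conic) (u : ℝ × ℝ) : ℝ := f.a * u.1 ^ 2 + f.b * u.1 * u.2 + f.c * u.2 ^ 2

def polar (f : Conic) (M u : ℝ × ℝ) : ℝ :=
  2 * f.a * M.1 * u.1 + f.b * (M.1 * u.2 + M.2 * u.1) + 2 * f.c * M.2 * u.2 + f.d * u.1 + f.e * u.2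

lemma eval_add_smul (f : Conic) (M u : ℝ × ℝ) (t : ℝ) :
    f.eval (M + t • u) = f.quadPart u * t ^ 2 + f.polar M u * t + f.eval M := by
  simp only [eval, quadPart, polar, Prod.fst_add, Prod.snd_add, Prod.smul_fst, Prod.smul_snd,
    smul_eq_mul]
  ring

lemma polar_eq_zero_of_eval_eq_zero {f : Conic} {M u : ℝ × ℝ} {t : ℝ} (ht : t ≠ 0)
    (hp : f.eval (M + t • u) = 0) (hm : f.eval (M - t • u) = 0) : f.polar M u = 0 := by
  rw [sub_eq_add_neg, ← neg_smul] at hm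
  rw [eval_add_smul] at hp hm
  have h : (2 * t) * f.polar M u = 0 := by linear_combination hp - hm
  exact (mul_eq_zero.mp h).resolve_left (mul_ne_zero two_ne_zero ht)

lemma exists_affineEval_mul_of_eval_line_eq_zero {f : Conic} {M u : ℝ × ℝ} (hu : u ≠ 0)
    (hv : ∀ t : ℝ, f.eval (M + t • u) = 0) :
    ∃ m : Fin 3 → ℝ, ∀ X, f.eval X = affineEval (lineThrough M (M + u)) X * affineEval m X := by
  have hn := fst_sq_add_snd_sq_ne_zero hu
  have h₀ := hv 0
  have h₁ := hv 1
  have h₂ := hv (-1)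
  simp only [eval_add_smul, zero_smul, add_zero] at h₀ h₁ h₂
  have hquad : f.quadPart u = 0 := by linear_combination (h₁ + h₂) / 2 - h₀
  have hpolar : f.polar M u = 0 := by linear_combination (h₁ - h₂) / 2
  simp only [quadPart, polar] at hquad hpolar
  have hM : f.a * M.1 ^ 2 + f.b * M.1 * M.2 + f.c * M.2 ^ 2 + f.d * M.1 + f.e * M.2 + f.g = 0 := by
    simpa only [eval, zero_mul, add_zero, zero_add] using h₀
  set n := u.1 ^ 2 + u.2 ^ 2
  -- With `X - M = s • u + τ • v`, `v = (u.2, -u.1)`, the vanishing on `ℓ` leaves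
  -- `f X = τ * (K * s + Qv * τ + Bv)`; `p, q, r` are this affine factor in the coordinates of `X`.
  set K := 2 * f.a * u.1 * u.2 + f.b * (u.2 ^ 2 - u.1 ^ 2) - 2 * f.c * u.1 * u.2
  set Qv := f.a * u.2 ^ 2 - f.b * u.1 * u.2 + f.c * u.1 ^ 2
  set Bv := 2 * f.a * M.1 * u.2 + f.b * (M.2 * u.2 - M.1 * u.1) - 2 * f.c * M.2 * u.1
      + f.d * u.2 - f.e * u.1
  set p := Qv * u.2 + K * u.1
  set q := K * u.2 - Qv * u.1
  set r := n * Bv - p * M.1 - q * M.2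
  refine ⟨![-p / n ^ 2, -q / n ^ 2, -r / n ^ 2], fun X => ?_⟩
  rw [affineEval_lineThrough]
  simp only [affineEval, Matrix.cons_val, Prod.fst_add, Prod.snd_add, add_sub_cancel_left, eval]
  field_simp
  linear_combination (u.1 * (X.1 - M.1) + u.2 * (X.2 - M.2)) ^ 2 * hquad
      + (n * (u.1 * (X.1 - M.1) + u.2 * (X.2 - M.2))) * hpolar + n ^ 2 * hM

lemma Nonzero.exists_eval_line_ne_zero {f : Conic} (hf : f.Nonzero) {A B C M u : ℝ × ℝ}
    (hu : u ≠ 0) (hABC : ¬ Collinear ℝ ({A, B, C} : Set (ℝ × ℝ)))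
    (hA : A ∉ parmLine M u) (hB : B ∉ parmLine M u) (hC : C ∉ parmLine M u)
    (hfA : f.eval A = 0) (hfB : f.eval B = 0) (hfC : f.eval C = 0) :
    ∃ t : ℝ, f.eval (M + t • u) ≠ 0 := by
  by_contra! hv
  obtain ⟨m, hm⟩ := exists_affineEval_mul_of_eval_line_eq_zero hu hv
  have hm_zero : ∀ X ∉ parmLine M u, f.eval X = 0 → affineEval m X = 0 := fun X hX hfX =>
    (mul_eq_zero.mp ((hm X).symm.trans hfX)).resolve_left
      (fun h => hX (mem_parmLine_of_affineEval_lineThrough_eq_zero hu h))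
  have hm0 := affineEval_eq_zero_of_not_collinear hABC (hm_zero A hA hfA) (hm_zero B hB hfB)
    (hm_zero C hC hfC)
  obtain ⟨X, hX⟩ := hf.exists_eval_ne_zero
  exact hX (by simp [hm, hm0, affineEval])

lemma exists_eval_ne_zero_of_not_collinear {X P Q R : ℝ × ℝ}
    (hQ : ¬ Collinear ℝ ({X, P, Q} : Set (ℝ × ℝ))) (hR : ¬ Collinear ℝ ({X, P, R} : Set (ℝ × ℝ))) :
    ∃ g : Conic, g.eval X ≠ 0 ∧ g.eval P = 0 ∧ g.eval Q = 0 ∧ g.eval R = 0 := by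
  refine ⟨mulAffine (lineThrough P Q) (lineThrough P R), ?_, ?_, ?_, ?_⟩ <;>
    simp only [eval_mulAffine, affineEval_lineThrough_left, affineEval_lineThrough_right,
      zero_mul, mul_zero, ne_eq, mul_eq_zero, not_or]
  exact ⟨fun h => hQ (collinear_of_affineEval_lineThrough_eq_zero h),
    fun h => hR (collinear_of_affineEval_lineThrough_eq_zero h)⟩

def coeffs (f : Conic) : Fin 6 → ℝ := ![f.a, f.b, f.c, f.d, f.e, f.g]

lemma Nonzero.coeffs_ne_zero {f : Conic} (hf : f.Nonzero) : f.coeffs ≠ 0 := by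
  intro h
  apply hf
  simpa [coeffs, funext_iff, Fin.forall_fin_succ] using h

def monomials (X : ℝ × ℝ) : Fin 6 → ℝ := ![X.1 ^ 2, X.1 * X.2, X.2 ^ 2, X.1, X.2, 1]

lemma eval_eq_dotProduct (f : Conic) (X : ℝ × ℝ) : f.eval X = monomials X ⬝ᵥ f.coeffs := by
  simp only [eval, dotProduct, monomials, coeffs, Fin.sum_univ_six, Matrix.cons_val]
  ring

def evalMatrix {ι : Type*} (pts : ι → ℝ × ℝ) : Matrix ι (Fin 6) ℝ := Matrix.of fun i => monomials (pts i)

lemma evalMatrix_mulVec_coeffs {ι : Type*} [Fintype ι] (pts : ι → ℝ × ℝ) (f : Conic) :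
    evalMatrix pts *ᵥ f.coeffs = fun i => f.eval (pts i) := by
  ext i
  rw [eval_eq_dotProduct]
  rfl

lemma mulVecLin_evalMatrix_surjective {ι : Type*} [Fintype ι] [DecidableEq ι]
    (pts : ι → ℝ × ℝ) (h : ∀ i, ∃ g : Conic, g.eval (pts i) ≠ 0 ∧ ∀ j ≠ i, g.eval (pts j) = 0) :
    Function.Surjective (evalMatrix pts).mulVecLin := by
  rw [← LinearMap.range_eq_top, eq_top_iff, ← (Pi.basisFun ℝ ι).span_eq, Submodule.span_le]
  rintro _ ⟨i, rfl⟩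
  obtain ⟨g, hgi, hgj⟩ := h i
  refine ⟨(g.eval (pts i))⁻¹ • g.coeffs, ?_⟩
  ext j
  rw [LinearMap.map_smul, Matrix.mulVecLin_apply, evalMatrix_mulVec_coeffs, Pi.basisFun_apply]
  rcases eq_or_ne j i with rfl | hji
  · simp [hgi]
  · simp [hgj j hji, hji]

lemma exists_separating_of_noThreeCollinear {A B C D : ℝ × ℝ} (h : NoThreeCollinear A B C D)
    (i : Fin 4) : ∃ g : Conic, g.eval (![A, B, C, D] i) ≠ 0 ∧
      ∀ j ≠ i, g.eval (![A, B, C, D] j) = 0 := by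
  obtain ⟨hABC, hABD, hACD, -⟩ := h
  have hBAC : ¬ Collinear ℝ ({B, A, C} : Set (ℝ × ℝ)) := by rwa [Set.insert_comm]
  have hBAD : ¬ Collinear ℝ ({B, A, D} : Set (ℝ × ℝ)) := by rwa [Set.insert_comm]
  have hCAB : ¬ Collinear ℝ ({C, A, B} : Set (ℝ × ℝ)) := by rwa [Set.insert_comm, Set.pair_comm]
  have hCAD : ¬ Collinear ℝ ({C, A, D} : Set (ℝ × ℝ)) := by rwa [Set.insert_comm]
  have hDAB : ¬ Collinear ℝ ({D, A, B} : Set (ℝ × ℝ)) := by rwa [Set.insert_comm, Set.pair_comm]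
  have hDAC : ¬ Collinear ℝ ({D, A, C} : Set (ℝ × ℝ)) := by rwa [Set.insert_comm, Set.pair_comm]
  fin_cases i
  · obtain ⟨g, hA, hB, hC, hD⟩ := exists_eval_ne_zero_of_not_collinear hABC hABD
    refine ⟨g, hA, fun j hj => ?_⟩
    fin_cases j <;> simp_all
  · obtain ⟨g, hB, hA, hC, hD⟩ := exists_eval_ne_zero_of_not_collinear hBAC hBAD
    refine ⟨g, hB, fun j hj => ?_⟩
    fin_cases j <;> simp_all
  · obtain ⟨g, hC, hA, hB, hD⟩ := exists_eval_ne_zero_of_not_collinear hCAB hCAD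
    refine ⟨g, hC, fun j hj => ?_⟩
    fin_cases j <;> simp_all
  · obtain ⟨g, hD, hA, hB, hC⟩ := exists_eval_ne_zero_of_not_collinear hDAB hDAC
    refine ⟨g, hD, fun j hj => ?_⟩
    fin_cases j <;> simp_all

lemma finrank_ker_mulVecLin_evalMatrix {A B C D : ℝ × ℝ} (h : NoThreeCollinear A B C D) :
    Module.finrank ℝ (LinearMap.ker (evalMatrix ![A, B, C, D]).mulVecLin) = 2 := by
  have hsurj := mulVecLin_evalMatrix_surjective _ (exists_separating_of_noThreeCollinear h)
  have hrank := LinearMap.finrank_range_add_finrank_ker (evalMatrix ![A, B, C, D]).mulVecLin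
  rw [LinearMap.range_eq_top.mpr hsurj, finrank_top, Module.finrank_fin_fun,
    Module.finrank_fin_fun] at hrank
  omega

lemma Through.coeffs_mem_ker {f : Conic} {A B C D : ℝ × ℝ} (hf : f.Through A B C D) :
    f.coeffs ∈ LinearMap.ker (evalMatrix ![A, B, C, D]).mulVecLin := by
  obtain ⟨hA, hB, hC, hD⟩ := hf
  rw [LinearMap.mem_ker, Matrix.mulVecLin_apply, evalMatrix_mulVec_coeffs]
  ext j
  fin_cases j <;> assumption

lemma linearIndependent_coeffs_pair {f₁ f₂ : Conic} {X : ℝ × ℝ} (h₁ : f₁.eval X ≠ 0)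
    (h₂ : f₂.eval X = 0) (hf₂ : f₂.Nonzero) : LinearIndependent ℝ ![f₁.coeffs, f₂.coeffs] := by
  have hc₁ : f₁.coeffs ≠ 0 := fun h => h₁ (by rw [eval_eq_dotProduct, h, dotProduct_zero])
  rw [LinearIndependent.pair_iff' hc₁]
  intro a ha
  have ha0 : a = 0 := by
    have := congrArg (monomials X ⬝ᵥ ·) ha
    simp only [dotProduct_smul, ← eval_eq_dotProduct, h₂, smul_eq_mul] at this
    exact (mul_eq_zero.mp this).resolve_right h₁
  exact hf₂.coeffs_ne_zero (by rw [← ha, ha0, zero_smul])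

theorem exists_eval_eq_linear_combination {A B C D : ℝ × ℝ} (hgen : NoThreeCollinear A B C D)
    {f₁ f₂ : Conic} (h₁ : f₁.Through A B C D) (h₂ : f₂.Through A B C D)
    (hind : LinearIndependent ℝ ![f₁.coeffs, f₂.coeffs]) {f : Conic} (hf : f.Through A B C D) :
    ∃ α β : ℝ, ∀ X, f.eval X = α * f₁.eval X + β * f₂.eval X := by
  have hspan : Submodule.span ℝ {f₁.coeffs, f₂.coeffs} =
      LinearMap.ker (evalMatrix ![A, B, C, D]).mulVecLin := by
    apply Submodule.eq_of_le_of_finrank_le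
    · rw [Submodule.span_le, Set.insert_subset_iff, Set.singleton_subset_iff]
      exact ⟨h₁.coeffs_mem_ker, h₂.coeffs_mem_ker⟩
    · rw [finrank_ker_mulVecLin_evalMatrix hgen, ← Matrix.range_cons_cons_empty,
        finrank_span_eq_card hind, Fintype.card_fin]
  obtain ⟨α, β, hαβ⟩ := Submodule.mem_span_pair.mp (hspan ▸ hf.coeffs_mem_ker)
  refine ⟨α, β, fun X => ?_⟩
  simp only [eval_eq_dotProduct, ← hαβ, dotProduct_add, dotProduct_smul, smul_eq_mul]

end Conic

lemma setOf_mul_sq_add_eq_zero_trichotomy {P G : ℝ} (h : P ≠ 0 ∨ G ≠ 0) :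
    {t : ℝ | P * t ^ 2 + G = 0} = ∅ ∨ {t : ℝ | P * t ^ 2 + G = 0} = {0} ∨
      ∃ t₁ : ℝ, t₁ ≠ 0 ∧ {t : ℝ | P * t ^ 2 + G = 0} = {t₁, -t₁} := by
  rcases eq_or_ne P 0 with rfl | hP
  · left
    ext t
    simpa using h.resolve_left (not_not.mpr rfl)
  have hS : {t : ℝ | P * t ^ 2 + G = 0} = {t | t ^ 2 = -G / P} := by
    ext t
    rw [Set.mem_ofPred_eq, Set.mem_ofPred_eq, eq_div_iff hP]
    constructor <;> intro h <;> linear_combination h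
  rw [hS]
  rcases lt_trichotomy (-G / P) 0 with hs | hs | hs
  · left
    ext t
    simpa using (hs.trans_le (sq_nonneg t)).ne'
  · right; left
    ext t
    simp [hs]
  · right; right
    refine ⟨Real.sqrt (-G / P), (Real.sqrt_pos.mpr hs).ne', ?_⟩
    ext t
    rw [Set.mem_ofPred_eq, Set.mem_insert_iff, Set.mem_singleton_iff,
      ← sq_eq_sq_iff_eq_or_eq_neg, Real.sq_sqrt hs.le]

theorem prop_one_affine_general
    (A B C D : ℝ × ℝ) (hgen : NoThreeCollinear A B C D)
    (u : ℝ × ℝ) (hu : u ≠ 0) (M : ℝ × ℝ)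
    (hA : A ∉ parmLine M u) (hB : B ∉ parmLine M u)
    (hC : C ∉ parmLine M u)
    (f₁ : Conic) (hf₁ : f₁.Through A B C D)
    (c : ℝ) (hc : c ≠ 0) (htan : ∀ t : ℝ, f₁.eval (M + t • u) = c * t ^ 2)
    (f₂ : Conic) (hf₂0 : f₂.Nonzero) (hf₂ : f₂.Through A B C D)
    (t₀ : ℝ) (ht₀ : t₀ ≠ 0)
    (h₂p : f₂.eval (M + t₀ • u) = 0) (h₂q : f₂.eval (M - t₀ • u) = 0) :
    ∀ f : Conic, f.Nonzero → f.Through A B C D →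
      {t : ℝ | f.eval (M + t • u) = 0} = ∅ ∨
      {t : ℝ | f.eval (M + t • u) = 0} = {0} ∨
      ∃ t₁ : ℝ, t₁ ≠ 0 ∧ {t : ℝ | f.eval (M + t • u) = 0} = {t₁, -t₁} := by
  intro f hf0 hf
  have hf₁t₀ : f₁.eval (M + t₀ • u) ≠ 0 := by
    rw [htan]
    exact mul_ne_zero hc (pow_ne_zero 2 ht₀)
  obtain ⟨α, β, hαβ⟩ := Conic.exists_eval_eq_linear_combination hgen hf₁ hf₂
    (Conic.linearIndependent_coeffs_pair hf₁t₀ h₂p hf₂0) hf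
  have hpolar := Conic.polar_eq_zero_of_eval_eq_zero ht₀ h₂p h₂q
  have hline : ∀ t : ℝ, f.eval (M + t • u) = (α * c + β * f₂.quadPart u) * t ^ 2 + β * f₂.eval M :=
    fun t => by rw [hαβ, htan, Conic.eval_add_smul, hpolar]; ring
  have hnz : α * c + β * f₂.quadPart u ≠ 0 ∨ β * f₂.eval M ≠ 0 := by
    obtain ⟨t, ht⟩ := hf0.exists_eval_line_ne_zero hu hgen.1 hA hB hC hf.1 hf.2.1 hf.2.2.1
    by_contra! h
    rw [hline, h.1, h.2, zero_mul, add_zero] at ht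
    exact ht rfl
  simp only [hline]
  exact setOf_mul_sq_add_eq_zero_trichotomy hnz

/-- **Proposition 1, affine midpoint form.** If one conic through the four base
points is tangent to the line `ℓ = {M + t·u}` at `M` (its restriction to `ℓ` is
`c·t²`) and another conic meets `ℓ` in two points symmetric about `M`, then every
conic through the four base points meets `ℓ` either not at all, or only at `M`,
or in a pair of points symmetric about `M`. -/
theorem prop_one_affine
    (A B C D : ℝ × ℝ) (hgen : NoThreeCollinear A B C D)
    (u : ℝ × ℝ) (hu : u ≠ 0) (M : ℝ × ℝ)
    (hA : A ∉ parmLine M u) (hB : B ∉ parmLine M u)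
    (hC : C ∉ parmLine M u) (hD : D ∉ parmLine M u)
    (f₁ : Conic) (hf₁0 : f₁.Nonzero) (hf₁ : f₁.Through A B C D)
    (c : ℝ) (hc : c ≠ 0) (htan : ∀ t : ℝ, f₁.eval (M + t • u) = c * t ^ 2)
    (f₂ : Conic) (hf₂0 : f₂.Nonzero) (hf₂ : f₂.Through A B C D)
    (t₀ : ℝ) (ht₀ : t₀ ≠ 0)
    (h₂p : f₂.eval (M + t₀ • u) = 0) (h₂q : f₂.eval (M - t₀ • u) = 0) :
    ∀ f : Conic, f.Nonzero → f.Through A B C D →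
      {t : ℝ | f.eval (M + t • u) = 0} = ∅ ∨
      {t : ℝ | f.eval (M + t • u) = 0} = {0} ∨
      ∃ t₁ : ℝ, t₁ ≠ 0 ∧ {t : ℝ | f.eval (M + t • u) = 0} = {t₁, -t₁} :=
  prop_one_affine_general A B C D hgen u hu M hA hB hC f₁ hf₁ c hc htan f₂ hf₂0 hf₂ t₀ ht₀ h₂p h₂q
end

section
/- Let v₁, v₂, v₃, v₄ ∈ ℝ³ be nonzero vectors such that every three of them are linearly independent, and let W ⊆ ℝ³ be a 2-dimensional subspace containing none of them. Suppose Q₁ and Q₂ are nonzero quadratic forms on ℝ³ vanishing at v₁, v₂, v₃, v₄ such that the zeros of Q₁ in the projective line of W are exactly two distinct points [p], [q], the zeros of Q₂ are exactly two distinct points [s], [t], the pairs {[p],[q]} and {[s],[t]} are different, and there exist two distinct points [m] ≠ [n] on the projective line of W with ([m],[n];[p],[q]) = −1 and ([m],[n];[s],[t]) = −1. Then for every nonzero quadratic form Q on ℝ³ vanishing at v₁, v₂, v₃, v₄, the set of zeros of Q in the projective line of W is either empty, or equal to {[m]}, or equal to {[n]}, or consists of two distinct points [x], [y] with ([m],[n];[x],[y])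 = −1. -/
/-- Four points `[m], [n], [p], [q]` of a projective line (with `[m] ≠ [n]`) form a
harmonic range, `([m],[n];[p],[q]) = -1`, if there are representative vectors
`a • m` of `[m]` and `b • n` of `[n]` such that `a • m + b • n` represents `[p]`
and `a • m - b • n` represents `[q]`. -/
def IsHarmonic (m n p q : Fin 3 → ℝ) : Prop :=
  ∃ a b : ℝ, a ≠ 0 ∧ b ≠ 0 ∧
    (∃ cp : ℝ, cp ≠ 0 ∧ a • m + b • n = cp • p) ∧
    (∃ cq : ℝ, cq ≠ 0 ∧ a • m - b • n = cq • q)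

/-- The zeros of a quadratic form `Q` on the projective line determined by the
2-dimensional subspace `W`, described as the set of nonzero vectors of `W` on
which `Q` vanishes. -/
def projZeros (Q : QuadraticForm ℝ (Fin 3 → ℝ)) (W : Submodule ℝ (Fin 3 → ℝ)) :
    Set (Fin 3 → ℝ) :=
  {w | w ∈ W ∧ w ≠ 0 ∧ Q w = 0}

/-- The set of nonzero vectors representing the projective point `[m]`. -/
def ray (m : Fin 3 → ℝ) : Set (Fin 3 → ℝ) :=
  {w | ∃ c : ℝ, c ≠ 0 ∧ w = c • m}

/-!
Conics through four points in general position form a pencil: `R ↦ (polar R v₁ v₂, polar R v₂ v₃)`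
is injective on the quadratic forms vanishing at the four points, so `Q`, `Q₁`, `Q₂` satisfy a
nontrivial linear relation. The harmonic conditions say that `Q₁` and `Q₂` are diagonal in the
basis `m, n` of `W` with nonzero diagonal entries; hence so is `Q`, and `Q` cannot vanish on all of
`W` because `Q₁` and `Q₂` cut `W` in different pairs. A diagonal form `s² A + t² C` on the line has
no zero, the single zero `[m]` or `[n]`, or, when `A C < 0`, the two zeros `[m ± r n]` with
`r² = -A / C`, which are harmonic with respect to `[m], [n]`.
-/

open QuadraticMap Submodule Module

section ThreeSpace

variable {K V : Type*} [Field K] [AddCommGroup V] [Module K V]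

theorem LinearIndependent.eq_zero_of_triple {x y z : V} (h : LinearIndependent K ![x, y, z])
    {a b c : K} (h' : a • x + b • y + c • z = 0) : a = 0 ∧ b = 0 ∧ c = 0 := by
  have := Fintype.linearIndependent_iff.mp h ![a, b, c] (by simpa [Fin.sum_univ_three] using h')
  exact ⟨this 0, this 1, this 2⟩

theorem LinearIndependent.exists_smul_add_smul_add_smul_eq {x y z : V}
    (h : LinearIndependent K ![x, y, z]) (hV : finrank K V = 3) (w : V) : ∃ a b c : K, a • x + b • y + c • z = w := by
  have hspan := h.span_eq_top_of_card_eq_finrank (by simp [hV])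
  rw [Matrix.range_cons, Matrix.range_cons_cons_empty, Set.singleton_union] at hspan
  exact mem_span_triple.mp (hspan ▸ mem_top)

theorem QuadraticMap.map_smul_add_smul_add_smul (Q : QuadraticForm K V) (a b c : K) (x y z : V) :
    Q (a • x + b • y + c • z) = a ^ 2 * Q x + b ^ 2 * Q y + c ^ 2 * Q z
      + a * b * polar Q x y + a * c * polar Q x z + b * c * polar Q y z := by
  rw [QuadraticMap.map_add Q, QuadraticMap.map_add Q, polar_add_left]
  simp only [QuadraticMap.map_smul, polar_smul_left, polar_smul_right, smul_eq_mul]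
  ring

theorem QuadraticMap.map_smul_add_smul_of_polar_eq_zero (Q : QuadraticForm K V) {x y : V}
    (h : polar Q x y = 0) (a b : K) : Q (a • x + b • y) = a ^ 2 * Q x + b ^ 2 * Q y := by
  rw [QuadraticMap.map_add Q]
  simp only [QuadraticMap.map_smul, polar_smul_left, polar_smul_right, smul_eq_mul, h]
  ring

theorem LinearIndependent.span_pair_eq_of_finrank_eq_two {x y : V}
    (hxy : LinearIndependent K ![x, y]) {W : Submodule K V} (hx : x ∈ W) (hy : y ∈ W)
    (hW : finrank K W = 2) : span K {x, y} = W := by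
  have : FiniteDimensional K W := .of_finrank_pos (by omega)
  refine eq_of_le_of_finrank_le (span_le.mpr (Set.pair_subset hx hy)) ?_
  have := finrank_span_eq_card hxy
  rw [Matrix.range_cons_cons_empty] at this
  rw [hW, this, Fintype.card_fin]

variable {v₁ v₂ v₃ v₄ : V}

theorem QuadraticMap.eq_zero_of_map_eq_zero_of_polar_eq_zero (hV : finrank K V = 3)
    (h123 : LinearIndependent K ![v₁, v₂, v₃]) (h124 : LinearIndependent K ![v₁, v₂, v₄])
    (h234 : LinearIndependent K ![v₂, v₃, v₄]) {Q : QuadraticForm K V}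
    (h₁ : Q v₁ = 0) (h₂ : Q v₂ = 0) (h₃ : Q v₃ = 0) (h₄ : Q v₄ = 0)
    (h₁₂ : polar Q v₁ v₂ = 0) (h₂₃ : polar Q v₂ v₃ = 0) : Q = 0 := by
  have hQ : ∀ a b c : K, Q (a • v₁ + b • v₂ + c • v₃) = a * c * polar Q v₁ v₃ := by
    intro a b c
    rw [map_smul_add_smul_add_smul, h₁, h₂, h₃, h₁₂, h₂₃]
    ring
  obtain ⟨a, b, c, hv₄⟩ := h123.exists_smul_add_smul_add_smul_eq hV v₄
  have ha : a ≠ 0 := by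
    rintro rfl
    have := h234.eq_zero_of_triple (a := b) (b := c) (c := -1) (by rw [← hv₄]; module)
    exact one_ne_zero (neg_eq_zero.mp this.2.2)
  have hc : c ≠ 0 := by
    rintro rfl
    have := h124.eq_zero_of_triple (a := a) (b := b) (c := -1) (by rw [← hv₄]; module)
    exact one_ne_zero (neg_eq_zero.mp this.2.2)
  have h₁₃ : polar Q v₁ v₃ = 0 := by
    simpa [ha, hc, hv₄, h₄] using (hQ a b c).symm
  ext w
  obtain ⟨a, b, c, rfl⟩ := h123.exists_smul_add_smul_add_smul_eq hV w
  simp [hQ, h₁₃]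

theorem QuadraticMap.exists_smul_add_smul_add_smul_eq_zero (hV : finrank K V = 3)
    (h123 : LinearIndependent K ![v₁, v₂, v₃]) (h124 : LinearIndependent K ![v₁, v₂, v₄])
    (h234 : LinearIndependent K ![v₂, v₃, v₄]) {R₀ R₁ R₂ : QuadraticForm K V}
    (hR₀ : R₀ v₁ = 0 ∧ R₀ v₂ = 0 ∧ R₀ v₃ = 0 ∧ R₀ v₄ = 0)
    (hR₁ : R₁ v₁ = 0 ∧ R₁ v₂ = 0 ∧ R₁ v₃ = 0 ∧ R₁ v₄ = 0)
    (hR₂ : R₂ v₁ = 0 ∧ R₂ v₂ = 0 ∧ R₂ v₃ = 0 ∧ R₂ v₄ = 0) :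
    ∃ a b c : K, (a ≠ 0 ∨ b ≠ 0 ∨ c ≠ 0) ∧ a • R₀ + b • R₁ + c • R₂ = 0 := by
  have hdep : ¬LinearIndependent K
      (fun i ↦ ![polar (![R₀, R₁, R₂] i) v₁ v₂, polar (![R₀, R₁, R₂] i) v₂ v₃]) := fun h ↦ by
    simpa using h.fintype_card_le_finrank
  obtain ⟨g, hg, i, hi⟩ := Fintype.not_linearIndependent_iff.mp hdep
  refine ⟨g 0, g 1, g 2, by fin_cases i <;> simp_all, ?_⟩
  have h₁₂ := congrFun hg 0
  have h₂₃ := congrFun hg 1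
  simp only [Fin.sum_univ_three, Finset.sum_apply, Pi.smul_apply] at h₁₂ h₂₃
  refine eq_zero_of_map_eq_zero_of_polar_eq_zero hV h123 h124 h234 ?_ ?_ ?_ ?_ ?_ ?_ <;>
    simp_all [polar_add, polar_smul]

end ThreeSpace

theorem self_mem_ray (p : Fin 3 → ℝ) : p ∈ ray p := ⟨1, one_ne_zero, (one_smul ℝ p).symm⟩

section Line

variable {m n p q : Fin 3 → ℝ}

theorem notMem_ray_of_smul_add_smul_eq (hmn : LinearIndependent ℝ ![m, n]) {a b c : ℝ}
    (ha : a ≠ 0) (hb : b ≠ 0) (h : a • m + b • n = c • p) : m ∉ ray p ∧ n ∉ ray p := by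
  constructor <;> rintro ⟨d, hd, hdp⟩ <;> rw [← inv_smul_eq_iff₀ hd] at hdp <;> subst hdp
  · exact hb (hmn.eq_zero_of_pair (s := a - c * d⁻¹)
      (by linear_combination (norm := module) h)).2
  · exact ha (hmn.eq_zero_of_pair (t := b - c * d⁻¹)
      (by linear_combination (norm := module) h)).1

theorem IsHarmonic.notMem_ray_union (h : IsHarmonic m n p q)
    (hmn : LinearIndependent ℝ ![m, n]) : m ∉ ray p ∪ ray q ∧ n ∉ ray p ∪ ray q := by
  obtain ⟨a, b, ha, hb, ⟨cp, -, hp⟩, ⟨cq, -, hq⟩⟩ := h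
  rw [sub_eq_add_neg, ← neg_smul] at hq
  have hp' := notMem_ray_of_smul_add_smul_eq hmn ha hb hp
  have hq' := notMem_ray_of_smul_add_smul_eq hmn ha (neg_ne_zero.mpr hb) hq
  simp only [Set.mem_union, not_or]
  exact ⟨⟨hp'.1, hq'.1⟩, hp'.2, hq'.2⟩

theorem IsHarmonic.polar_eq_zero (h : IsHarmonic m n p q) {Q : QuadraticForm ℝ (Fin 3 → ℝ)}
    (hp : Q p = 0) (hq : Q q = 0) : polar Q m n = 0 := by
  obtain ⟨a, b, ha, hb, ⟨cp, -, hp'⟩, ⟨cq, -, hq'⟩⟩ := h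
  rw [sub_eq_add_neg, ← neg_smul] at hq'
  have e₁ : Q (a • m + b • n) = 0 := by rw [hp', QuadraticMap.map_smul, hp, smul_zero]
  have e₂ : Q (a • m + (-b) • n) = 0 := by rw [hq', QuadraticMap.map_smul, hq, smul_zero]
  -- `Q (a m + b n) - Q (a m - b n) = 2 a b polar Q m n`
  rw [QuadraticMap.map_add Q] at e₁ e₂
  simp only [QuadraticMap.map_smul, polar_smul_left, polar_smul_right, smul_eq_mul] at e₁ e₂
  have : 2 * a * b * polar Q m n = 0 := by linear_combination e₁ - e₂
  simpa [ha, hb] using this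

theorem IsHarmonic.polar_eq_zero_and_map_ne_zero (h : IsHarmonic m n p q)
    (hmn : LinearIndependent ℝ ![m, n]) {W : Submodule ℝ (Fin 3 → ℝ)} (hm : m ∈ W) (hn : n ∈ W)
    {Q : QuadraticForm ℝ (Fin 3 → ℝ)} (hQ : projZeros Q W = ray p ∪ ray q) :
    polar Q m n = 0 ∧ Q m ≠ 0 ∧ Q n ≠ 0 := by
  have hzero {w} (hw : w ∈ ray p ∪ ray q) : Q w = 0 := (hQ ▸ hw : w ∈ projZeros Q W).2.2
  obtain ⟨hm', hn'⟩ := h.notMem_ray_union hmn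
  refine ⟨h.polar_eq_zero (hzero (.inl (self_mem_ray p))) (hzero (.inr (self_mem_ray q))),
    fun hQm ↦ hm' ?_, fun hQn ↦ hn' ?_⟩
  · exact hQ ▸ ⟨hm, hmn.ne_zero 0, hQm⟩
  · exact hQ ▸ ⟨hn, hmn.ne_zero 1, hQn⟩

section Diagonal

variable {Q : QuadraticForm ℝ (Fin 3 → ℝ)}

theorem smul_add_smul_mem_projZeros_iff (hmn : LinearIndependent ℝ ![m, n])
    (hpol : polar Q m n = 0) {s t : ℝ} :
    s • m + t • n ∈ projZeros Q (span ℝ {m, n}) ↔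
      (s ≠ 0 ∨ t ≠ 0) ∧ s ^ 2 * Q m + t ^ 2 * Q n = 0 := by
  have hne : s • m + t • n ≠ 0 ↔ s ≠ 0 ∨ t ≠ 0 := by
    rw [← not_and_or, not_iff_not]
    exact ⟨hmn.eq_zero_of_pair, by rintro ⟨rfl, rfl⟩; simp⟩
  simp only [projZeros, Set.mem_ofPred_eq, mem_span_pair.mpr ⟨s, t, rfl⟩, true_and, hne,
    map_smul_add_smul_of_polar_eq_zero Q hpol]

theorem projZeros_span_pair_eq_ray (hmn : LinearIndependent ℝ ![m, n])
    (hpol : polar Q m n = 0) (hQm : Q m = 0) (hQn : Q n ≠ 0) :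
    projZeros Q (span ℝ {m, n}) = ray m := by
  ext w
  constructor
  · rintro hw
    obtain ⟨s, t, rfl⟩ := mem_span_pair.mp hw.1
    obtain ⟨hst, hQ⟩ := (smul_add_smul_mem_projZeros_iff hmn hpol).mp hw
    obtain rfl : t = 0 := by simpa [hQm, hQn] using hQ
    exact ⟨s, by simpa using hst, by simp⟩
  · rintro ⟨c, hc, rfl⟩
    simpa [hc, hQm] using smul_add_smul_mem_projZeros_iff hmn hpol (Q := Q) (s := c) (t := 0)

theorem projZeros_span_pair_eq_empty (hmn : LinearIndependent ℝ ![m, n])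
    (hpol : polar Q m n = 0) (h : 0 < Q m * Q n) : projZeros Q (span ℝ {m, n}) = ∅ := by
  refine Set.eq_empty_of_forall_notMem fun w hw ↦ ?_
  obtain ⟨s, t, rfl⟩ := mem_span_pair.mp hw.1
  obtain ⟨hst, hQ⟩ := (smul_add_smul_mem_projZeros_iff hmn hpol).mp hw
  -- multiplying by `Q m` turns the equation into a sum of two nonnegative terms
  have hsum : (s * Q m) ^ 2 + t ^ 2 * (Q m * Q n) = 0 := by linear_combination Q m * hQ
  have hts : t ^ 2 * (Q m * Q n) = 0 :=
    le_antisymm (by nlinarith [sq_nonneg (s * Q m)]) (by positivity)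
  have ht : t = 0 := by simpa [h.ne'] using hts
  have hs : s = 0 := by simpa [ht, (left_ne_zero_of_mul h.ne')] using hsum
  simp [hs, ht] at hst

theorem projZeros_span_pair_eq_ray_union (hmn : LinearIndependent ℝ ![m, n])
    (hpol : polar Q m n = 0) (hQn : Q n ≠ 0) {r : ℝ} (hr : Q m + r ^ 2 * Q n = 0) :
    projZeros Q (span ℝ {m, n}) = ray (m + r • n) ∪ ray (m - r • n) := by
  ext w
  constructor
  · intro hw
    obtain ⟨s, t, rfl⟩ := mem_span_pair.mp hw.1
    obtain ⟨hst, hQ⟩ := (smul_add_smul_mem_projZeros_iff hmn hpol).mp hw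
    have hfac : (t - r * s) * (t + r * s) = 0 :=
      mul_right_cancel₀ hQn (by linear_combination hQ - s ^ 2 * hr)
    have hs : s ≠ 0 := by
      rintro rfl
      simp [show t = 0 by simpa using hfac] at hst
    rcases mul_eq_zero.mp hfac with h | h
    · exact .inl ⟨s, hs, by rw [show t = r * s by linarith]; module⟩
    · exact .inr ⟨s, hs, by rw [show t = -(r * s) by linarith]; module⟩
  · rintro (⟨c, hc, rfl⟩ | ⟨c, hc, rfl⟩)
    · convert (smul_add_smul_mem_projZeros_iff hmn hpol (s := c) (t := c * r)).mpr
        ⟨.inl hc, by linear_combination c ^ 2 * hr⟩ using 1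
      module
    · convert (smul_add_smul_mem_projZeros_iff hmn hpol (s := c) (t := -(c * r))).mpr
        ⟨.inl hc, by linear_combination c ^ 2 * hr⟩ using 1
      module

theorem exists_isHarmonic_projZeros_span_pair_eq (hmn : LinearIndependent ℝ ![m, n])
    (hpol : polar Q m n = 0) (h : Q m * Q n < 0) :
    ∃ x y : Fin 3 → ℝ, x ∈ span ℝ {m, n} ∧ y ∈ span ℝ {m, n} ∧ x ≠ 0 ∧ y ≠ 0 ∧
      (∀ c : ℝ, y ≠ c • x) ∧ projZeros Q (span ℝ {m, n}) = ray x ∪ ray y ∧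
      IsHarmonic m n x y := by
  have hQn : Q n ≠ 0 := right_ne_zero_of_mul h.ne
  have hpos : 0 < -(Q m / Q n) := by
    rw [neg_pos, ← mul_div_mul_right (Q m) (Q n) hQn]
    exact div_neg_of_neg_of_pos h (mul_self_pos.mpr hQn)
  set r := √(-(Q m / Q n))
  have hr : r ≠ 0 := (Real.sqrt_pos.mpr hpos).ne'
  have hr2 : Q m + r ^ 2 * Q n = 0 := by
    rw [Real.sq_sqrt hpos.le]
    field_simp
    ring
  refine ⟨m + r • n, m - r • n, mem_span_pair.mpr ⟨1, r, by simp⟩,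
    mem_span_pair.mpr ⟨1, -r, by simp [sub_eq_add_neg]⟩, fun h0 ↦ ?_, fun h0 ↦ ?_, fun c hc ↦ ?_,
    projZeros_span_pair_eq_ray_union hmn hpol hQn hr2,
    ⟨1, r, one_ne_zero, hr, ⟨1, one_ne_zero, by simp⟩, ⟨1, one_ne_zero, by simp⟩⟩⟩
  · exact one_ne_zero (hmn.eq_zero_of_pair (s := 1) (t := r) (by simpa using h0)).1
  · exact one_ne_zero
      (hmn.eq_zero_of_pair (s := 1) (t := -r) (by simpa [sub_eq_add_neg] using h0)).1
  · obtain ⟨hc1, hcr⟩ := hmn.eq_zero_of_pair (s := 1 - c) (t := -r - c * r)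
      (by linear_combination (norm := module) hc)
    obtain rfl : c = 1 := by linarith
    exact hr (by linarith)

theorem projZeros_span_pair_cases (hmn : LinearIndependent ℝ ![m, n]) (hpol : polar Q m n = 0)
    (hne : Q m ≠ 0 ∨ Q n ≠ 0) :
    projZeros Q (span ℝ {m, n}) = ∅ ∨ projZeros Q (span ℝ {m, n}) = ray m ∨
      projZeros Q (span ℝ {m, n}) = ray n ∨
      ∃ x y : Fin 3 → ℝ, x ∈ span ℝ {m, n} ∧ y ∈ span ℝ {m, n} ∧ x ≠ 0 ∧ y ≠ 0 ∧
        (∀ c : ℝ, y ≠ c • x) ∧ projZeros Q (span ℝ {m, n}) = ray x ∪ ray y ∧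
        IsHarmonic m n x y := by
  rcases lt_trichotomy (Q m * Q n) 0 with h | h | h
  · exact .inr <| .inr <| .inr <| exists_isHarmonic_projZeros_span_pair_eq hmn hpol h
  · rcases mul_eq_zero.mp h with hQm | hQn
    · exact .inr <| .inl <| projZeros_span_pair_eq_ray hmn hpol hQm (hne.resolve_left (· hQm))
    · refine .inr <| .inr <| .inl ?_
      rw [Set.pair_comm]
      exact projZeros_span_pair_eq_ray (LinearIndependent.pair_symm_iff.mp hmn)
        (by rwa [polar_comm]) hQn (hne.resolve_right (· hQn))
  · exact .inl <| projZeros_span_pair_eq_empty hmn hpol h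

end Diagonal

theorem projZeros_eq_of_forall_mul_add_mul_eq_zero {W : Submodule ℝ (Fin 3 → ℝ)}
    {Q₁ Q₂ : QuadraticForm ℝ (Fin 3 → ℝ)} {w : Fin 3 → ℝ} (hw : w ∈ W) (h₁ : Q₁ w ≠ 0)
    (h₂ : Q₂ w ≠ 0) {b c : ℝ} (hbc : b ≠ 0 ∨ c ≠ 0) (h : ∀ x ∈ W, b * Q₁ x + c * Q₂ x = 0) :
    projZeros Q₁ W = projZeros Q₂ W := by
  have hb : b ≠ 0 := by
    rintro rfl
    simpa [hbc.resolve_left (· rfl), h₂] using h w hw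
  have hc : c ≠ 0 := by
    rintro rfl
    simpa [hb, h₁] using h w hw
  ext x
  refine and_congr_right fun hx ↦ and_congr_right fun _ ↦ ?_
  have := h x hx
  constructor <;> intro h0 <;> simpa [h0, hb, hc] using this

theorem polar_eq_zero_and_map_ne_zero_of_smul_add_smul_add_smul_eq_zero
    {Q Q₁ Q₂ : QuadraticForm ℝ (Fin 3 → ℝ)} (hpol₁ : polar Q₁ m n = 0)
    (hpol₂ : polar Q₂ m n = 0) (hQ₁m : Q₁ m ≠ 0) (hQ₂m : Q₂ m ≠ 0)
    (hdiff : projZeros Q₁ (span ℝ {m, n}) ≠ projZeros Q₂ (span ℝ {m, n})) (hQ : Q ≠ 0)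
    {a b c : ℝ} (habc : a ≠ 0 ∨ b ≠ 0 ∨ c ≠ 0) (h : a • Q + b • Q₁ + c • Q₂ = 0) :
    polar Q m n = 0 ∧ (Q m ≠ 0 ∨ Q n ≠ 0) := by
  have hm : m ∈ span ℝ {m, n} := subset_span (by simp)
  have happly (x) : a * Q x + b * Q₁ x + c * Q₂ x = 0 := by simpa using DFunLike.congr_fun h x
  have ha : a ≠ 0 := by
    rintro rfl
    exact hdiff <| projZeros_eq_of_forall_mul_add_mul_eq_zero hm hQ₁m hQ₂m (by simpa using habc)
      fun x _ ↦ by simpa using happly x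
  have hpol : polar Q m n = 0 := by
    have : a * polar Q m n = 0 := by
      simp only [polar] at hpol₁ hpol₂ ⊢
      linear_combination happly (m + n) - happly m - happly n - b * hpol₁ - c * hpol₂
    simpa [ha] using this
  refine ⟨hpol, ?_⟩
  by_contra! h0
  -- `Q` vanishes on the whole line, so `b Q₁ + c Q₂` does too
  have hQW (x) (hx : x ∈ span ℝ {m, n}) : Q x = 0 := by
    obtain ⟨s, t, rfl⟩ := mem_span_pair.mp hx
    rw [map_smul_add_smul_of_polar_eq_zero Q hpol, h0.1, h0.2]
    ring
  have hbc : b ≠ 0 ∨ c ≠ 0 := by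
    by_contra! hbc
    exact hQ (QuadraticMap.ext fun x ↦ by simpa [hbc, ha] using happly x)
  exact hdiff <| projZeros_eq_of_forall_mul_add_mul_eq_zero hm hQ₁m hQ₂m hbc
    fun x hx ↦ by simpa [hQW x hx] using happly x

end Line

theorem prop_two_general
    (v₁ v₂ v₃ v₄ : Fin 3 → ℝ)
    (h123 : LinearIndependent ℝ ![v₁, v₂, v₃])
    (h124 : LinearIndependent ℝ ![v₁, v₂, v₄])
    (h234 : LinearIndependent ℝ ![v₂, v₃, v₄])
    (W : Submodule ℝ (Fin 3 → ℝ)) (hW : Module.finrank ℝ W = 2)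
    (Q₁ Q₂ : QuadraticForm ℝ (Fin 3 → ℝ))
    (hQ₁v : Q₁ v₁ = 0 ∧ Q₁ v₂ = 0 ∧ Q₁ v₃ = 0 ∧ Q₁ v₄ = 0)
    (hQ₂v : Q₂ v₁ = 0 ∧ Q₂ v₂ = 0 ∧ Q₂ v₃ = 0 ∧ Q₂ v₄ = 0)
    (p q s t : Fin 3 → ℝ)
    (hQ₁W : projZeros Q₁ W = ray p ∪ ray q)
    (hQ₂W : projZeros Q₂ W = ray s ∪ ray t)
    (hpairs : ray p ∪ ray q ≠ ray s ∪ ray t)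
    (m n : Fin 3 → ℝ) (hm : m ∈ W) (hn : n ∈ W) (hm0 : m ≠ 0)
    (hmn : ∀ c : ℝ, n ≠ c • m)
    (hharm₁ : IsHarmonic m n p q) (hharm₂ : IsHarmonic m n s t) :
    ∀ Q : QuadraticForm ℝ (Fin 3 → ℝ), Q ≠ 0 →
      Q v₁ = 0 → Q v₂ = 0 → Q v₃ = 0 → Q v₄ = 0 →
      projZeros Q W = ∅ ∨ projZeros Q W = ray m ∨ projZeros Q W = ray n ∨
      ∃ x y : Fin 3 → ℝ, x ∈ W ∧ y ∈ W ∧ x ≠ 0 ∧ y ≠ 0 ∧ (∀ c : ℝ, y ≠ c • x) ∧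
        projZeros Q W = ray x ∪ ray y ∧ IsHarmonic m n x y := by
  intro Q hQ hQv₁ hQv₂ hQv₃ hQv₄
  have hind : LinearIndependent ℝ ![m, n] :=
    (LinearIndependent.pair_iff' hm0).mpr fun c h ↦ hmn c h.symm
  obtain rfl := hind.span_pair_eq_of_finrank_eq_two hm hn hW
  obtain ⟨hpol₁, hQ₁m, -⟩ := hharm₁.polar_eq_zero_and_map_ne_zero hind hm hn hQ₁W
  obtain ⟨hpol₂, hQ₂m, -⟩ := hharm₂.polar_eq_zero_and_map_ne_zero hind hm hn hQ₂W
  obtain ⟨a, b, c, habc, hrel⟩ := exists_smul_add_smul_add_smul_eq_zero (by simp) h123 h124 h234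
    ⟨hQv₁, hQv₂, hQv₃, hQv₄⟩ hQ₁v hQ₂v
  obtain ⟨hpol, hne⟩ := polar_eq_zero_and_map_ne_zero_of_smul_add_smul_add_smul_eq_zero
    hpol₁ hpol₂ hQ₁m hQ₂m (by rwa [hQ₁W, hQ₂W]) hQ habc hrel
  exact projZeros_span_pair_cases hind hpol hne

/-- **Proposition 2.** Suppose two different conics through the four base points
meet the line of `W` in two different pairs of distinct points `{[p],[q]}` and
`{[s],[t]}`, and suppose there are two distinct points `[m] ≠ [n]` on the line with
`([m],[n];[p],[q]) = -1 = ([m],[n];[s],[t])`. Then every conic through the four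
base points meets the line either not at all, or exactly in `[m]`, or exactly in
`[n]`, or in two distinct points `[x], [y]` with `([m],[n];[x],[y]) = -1`. -/
theorem prop_two
    (v₁ v₂ v₃ v₄ : Fin 3 → ℝ)
    (hv₁ : v₁ ≠ 0) (hv₂ : v₂ ≠ 0) (hv₃ : v₃ ≠ 0) (hv₄ : v₄ ≠ 0)
    (h123 : LinearIndependent ℝ ![v₁, v₂, v₃])
    (h124 : LinearIndependent ℝ ![v₁, v₂, v₄])
    (h134 : LinearIndependent ℝ ![v₁, v₃, v₄])
    (h234 : LinearIndependent ℝ ![v₂, v₃, v₄])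
    (W : Submodule ℝ (Fin 3 → ℝ)) (hW : Module.finrank ℝ W = 2)
    (hWv₁ : v₁ ∉ W) (hWv₂ : v₂ ∉ W) (hWv₃ : v₃ ∉ W) (hWv₄ : v₄ ∉ W)
    (Q₁ Q₂ : QuadraticForm ℝ (Fin 3 → ℝ)) (hQ₁ : Q₁ ≠ 0) (hQ₂ : Q₂ ≠ 0)
    (hQ₁v : Q₁ v₁ = 0 ∧ Q₁ v₂ = 0 ∧ Q₁ v₃ = 0 ∧ Q₁ v₄ = 0)
    (hQ₂v : Q₂ v₁ = 0 ∧ Q₂ v₂ = 0 ∧ Q₂ v₃ = 0 ∧ Q₂ v₄ = 0)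
    (p q s t : Fin 3 → ℝ)
    (hp : p ∈ W) (hq : q ∈ W) (hs : s ∈ W) (ht : t ∈ W)
    (hp0 : p ≠ 0) (hq0 : q ≠ 0) (hs0 : s ≠ 0) (ht0 : t ≠ 0)
    (hpq : ∀ c : ℝ, q ≠ c • p) (hst : ∀ c : ℝ, t ≠ c • s)
    (hQ₁W : projZeros Q₁ W = ray p ∪ ray q)
    (hQ₂W : projZeros Q₂ W = ray s ∪ ray t)
    (hpairs : ray p ∪ ray q ≠ ray s ∪ ray t)
    (m n : Fin 3 → ℝ) (hm : m ∈ W) (hn : n ∈ W) (hm0 : m ≠ 0) (hn0 : n ≠ 0)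
    (hmn : ∀ c : ℝ, n ≠ c • m)
    (hharm₁ : IsHarmonic m n p q) (hharm₂ : IsHarmonic m n s t) :
    ∀ Q : QuadraticForm ℝ (Fin 3 → ℝ), Q ≠ 0 →
      Q v₁ = 0 → Q v₂ = 0 → Q v₃ = 0 → Q v₄ = 0 →
      projZeros Q W = ∅ ∨ projZeros Q W = ray m ∨ projZeros Q W = ray n ∨
      ∃ x y : Fin 3 → ℝ, x ∈ W ∧ y ∈ W ∧ x ≠ 0 ∧ y ≠ 0 ∧ (∀ c : ℝ, y ≠ c • x) ∧
        projZeros Q W = ray x ∪ ray y ∧ IsHarmonic m n x y :=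
  prop_two_general v₁ v₂ v₃ v₄ h123 h124 h234 W hW Q₁ Q₂ hQ₁v hQ₂v p q s t hQ₁W hQ₂W hpairs m n hm
    hn hm0 hmn hharm₁ hharm₂
end

section
/- Let A, B, C, D ∈ ℝ² with no three collinear, let ℓ be a line containing none of A, B, C, D, and let M ∈ ℓ. Suppose there are conics f₁ and f₂ through A, B, C, D such that the intersection of the zero set of f₁ with ℓ is exactly {P, Q} with P ≠ Q and M = (P + Q)/2, the intersection of the zero set of f₂ with ℓ is exactly {S, T} with S ≠ T and M = (S + T)/2, and {P, Q} ≠ {S, T}. Then every conic f through A, B, C, D meets ℓ either in the empty set, or exactly in {M}, or exactly in a pair of distinct points whose midpoint is M. -/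
/-!
Conics through four points in general position form a pencil: evaluation at the four points
is onto `ℝ⁴`, since a line pair through three of them misses the fourth, so its kernel is
two-dimensional and is spanned by `f₁` and `f₂`. On `ℓ`, parametrized as `M + t • u`, the
conics `f₁` and `f₂` restrict to `a₁ (t² - r₁²)` and `a₂ (t² - r₂²)` with `r₁² ≠ r₂²`; hence
every `α • f₁ + β • f₂` restricts to an even quadratic `A t² + C`, which vanishes identically
only if `α = β = 0`. The zero set of such a quadratic is empty, `{0}` or `{s, -s}`.
-/

namespace Conic

def equivCoeffs : Conic ≃ (Fin 6 → ℝ) where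
  toFun f := ![f.a, f.b, f.c, f.d, f.e, f.g]
  invFun v := ⟨v 0, v 1, v 2, v 3, v 4, v 5⟩
  left_inv _ := rfl
  right_inv v := by ext i; fin_cases i <;> rfl

@[simp] theorem equivCoeffs_apply (f : Conic) :
    equivCoeffs f = ![f.a, f.b, f.c, f.d, f.e, f.g] := rfl

@[simp] theorem equivCoeffs_symm_apply (v : Fin 6 → ℝ) :
    equivCoeffs.symm v = ⟨v 0, v 1, v 2, v 3, v 4, v 5⟩ := rfl

instance : AddCommGroup Conic := equivCoeffs.addCommGroup

noncomputable instance : Module ℝ Conic := equivCoeffs.module ℝ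

noncomputable def linearEquivCoeffs : Conic ≃ₗ[ℝ] (Fin 6 → ℝ) := equivCoeffs.linearEquiv ℝ

instance : FiniteDimensional ℝ Conic := linearEquivCoeffs.symm.finiteDimensional

theorem finrank_eq : Module.finrank ℝ Conic = 6 := by
  simp [linearEquivCoeffs.finrank_eq]

theorem nonzero_iff_ne_zero {f : Conic} : f.Nonzero ↔ f ≠ 0 := by
  rw [Nonzero, not_iff_not, ← equivCoeffs.apply_eq_iff_eq, Equiv.zero_def,
    Equiv.apply_symm_apply]
  simp

noncomputable def evalₗ (p : ℝ × ℝ) : Conic →ₗ[ℝ] ℝ where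
  toFun f := f.eval p
  map_add' f g := by
    simp only [eval, Equiv.add_def, equivCoeffs_apply, equivCoeffs_symm_apply, Matrix.add_cons,
      Matrix.head_cons, Matrix.tail_cons, Matrix.cons_val_zero, Matrix.cons_val_one,
      Matrix.cons_val]
    ring
  map_smul' r f := by
    simp only [eval, Equiv.smul_def, equivCoeffs_apply, equivCoeffs_symm_apply, Matrix.smul_cons,
      smul_eq_mul, Matrix.cons_val_zero, Matrix.cons_val_one, Matrix.cons_val, RingHom.id_apply]
    ring

@[simp] theorem eval_add (f g : Conic) (p : ℝ × ℝ) : (f + g).eval p = f.eval p + g.eval p :=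
  (evalₗ p).map_add f g

@[simp] theorem eval_smul (r : ℝ) (f : Conic) (p : ℝ × ℝ) : (r • f).eval p = r * f.eval p :=
  (evalₗ p).map_smul r f

@[simp] theorem eval_zero (p : ℝ × ℝ) : (0 : Conic).eval p = 0 :=
  (evalₗ p).map_zero

end Conic

def cross (P Q R : ℝ × ℝ) : ℝ := (Q.1 - P.1) * (R.2 - P.2) - (Q.2 - P.2) * (R.1 - P.1)

@[simp] theorem cross_self_left (P Q : ℝ × ℝ) : cross P Q P = 0 := by
  simp [cross]

@[simp] theorem cross_self_right (P Q : ℝ × ℝ) : cross P Q Q = 0 := by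
  simp only [cross]; ring

theorem collinear_of_cross_eq_zero {P Q R : ℝ × ℝ} (h : cross P Q R = 0) :
    Collinear ℝ ({P, Q, R} : Set (ℝ × ℝ)) := by
  rcases eq_or_ne P Q with rfl | hPQ
  · simpa using collinear_pair ℝ P R
  have hn : (Q.1 - P.1) ^ 2 + (Q.2 - P.2) ^ 2 ≠ 0 := by
    intro h0
    apply hPQ
    ext <;> nlinarith [sq_nonneg (Q.1 - P.1), sq_nonneg (Q.2 - P.2)]
  rw [← Set.pair_comm, ← Set.insert_comm]
  apply collinear_insert_of_mem_affineSpan_pair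
  convert AffineMap.lineMap_mem_affineSpan_pair
    (((R.1 - P.1) * (Q.1 - P.1) + (R.2 - P.2) * (Q.2 - P.2)) /
      ((Q.1 - P.1) ^ 2 + (Q.2 - P.2) ^ 2)) P Q using 1
  unfold cross at h
  ext <;> simp only [AffineMap.lineMap_apply, vsub_eq_sub, vadd_eq_add, Prod.fst_add,
    Prod.snd_add, Prod.smul_fst, Prod.smul_snd, Prod.fst_sub, Prod.snd_sub, smul_eq_mul] <;>
    field_simp
  · linear_combination (P.2 - Q.2) * h
  · linear_combination (Q.1 - P.1) * h

namespace Conic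

def linePair (P Q R S : ℝ × ℝ) : Conic where
  a := (P.2 - Q.2) * (R.2 - S.2)
  b := (P.2 - Q.2) * (S.1 - R.1) + (Q.1 - P.1) * (R.2 - S.2)
  c := (Q.1 - P.1) * (S.1 - R.1)
  d := (P.2 - Q.2) * (R.1 * S.2 - R.2 * S.1) + (P.1 * Q.2 - P.2 * Q.1) * (R.2 - S.2)
  e := (Q.1 - P.1) * (R.1 * S.2 - R.2 * S.1) + (P.1 * Q.2 - P.2 * Q.1) * (S.1 - R.1)
  g := (P.1 * Q.2 - P.2 * Q.1) * (R.1 * S.2 - R.2 * S.1)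

theorem eval_linePair (P Q R S X : ℝ × ℝ) :
    (linePair P Q R S).eval X = cross P Q X * cross R S X := by
  simp only [eval, linePair, cross]
  ring

theorem exists_eval_eq_one_of_not_collinear {P Q R S : ℝ × ℝ}
    (hR : ¬ Collinear ℝ ({Q, R, P} : Set (ℝ × ℝ)))
    (hS : ¬ Collinear ℝ ({Q, S, P} : Set (ℝ × ℝ))) :
    ∃ f : Conic, f.eval P = 1 ∧ f.eval Q = 0 ∧ f.eval R = 0 ∧ f.eval S = 0 := by
  have hQRP : cross Q R P ≠ 0 := mt collinear_of_cross_eq_zero hR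
  have hQSP : cross Q S P ≠ 0 := mt collinear_of_cross_eq_zero hS
  refine ⟨(cross Q R P * cross Q S P)⁻¹ • linePair Q R Q S, ?_, ?_, ?_, ?_⟩
  · simp only [eval_smul, eval_linePair, inv_mul_cancel₀ (mul_ne_zero hQRP hQSP)]
  all_goals simp [eval_linePair]

noncomputable def evalFour (A B C D : ℝ × ℝ) : Conic →ₗ[ℝ] ℝ × ℝ × ℝ × ℝ :=
  (evalₗ A).prod ((evalₗ B).prod ((evalₗ C).prod (evalₗ D)))

theorem mem_ker_evalFour {A B C D : ℝ × ℝ} {f : Conic} :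
    f ∈ LinearMap.ker (evalFour A B C D) ↔ f.Through A B C D := by
  simp [evalFour, evalₗ, Through]

theorem evalFour_surjective {A B C D : ℝ × ℝ} (h : NoThreeCollinear A B C D) :
    Function.Surjective (evalFour A B C D) := by
  obtain ⟨hABC, hABD, hACD, -⟩ := h
  obtain ⟨fA, hAA, hAB, hAC, hAD⟩ := exists_eval_eq_one_of_not_collinear (P := A) (Q := B)
    (R := C) (S := D) (by rwa [Set.pair_comm, Set.insert_comm])
    (by rwa [Set.pair_comm, Set.insert_comm])
  obtain ⟨fB, hBB, hBA, hBC, hBD⟩ := exists_eval_eq_one_of_not_collinear (P := B) (Q := A)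
    (R := C) (S := D) (by rwa [Set.pair_comm]) (by rwa [Set.pair_comm])
  obtain ⟨fC, hCC, hCA, hCB, hCD⟩ := exists_eval_eq_one_of_not_collinear (P := C) (Q := A)
    (R := B) (S := D) hABC (by rwa [Set.pair_comm])
  obtain ⟨fD, hDD, hDA, hDB, hDC⟩ := exists_eval_eq_one_of_not_collinear (P := D) (Q := A)
    (R := B) (S := C) hABD hACD
  rintro ⟨yA, yB, yC, yD⟩
  refine ⟨yA • fA + yB • fB + yC • fC + yD • fD, ?_⟩
  simp [evalFour, evalₗ, *]

theorem finrank_ker_evalFour {A B C D : ℝ × ℝ} (h : NoThreeCollinear A B C D) :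
    Module.finrank ℝ (LinearMap.ker (evalFour A B C D)) = 2 := by
  have := LinearMap.finrank_range_add_finrank_ker (evalFour A B C D)
  rw [LinearMap.range_eq_top.2 (evalFour_surjective h), finrank_top, finrank_eq] at this
  simp only [Module.finrank_prod, Module.finrank_self] at this
  omega

theorem exists_smul_add_smul_eq_of_through {A B C D : ℝ × ℝ} (h : NoThreeCollinear A B C D)
    {f₁ f₂ f : Conic} (h₁ : f₁.Through A B C D) (h₂ : f₂.Through A B C D)
    (hf : f.Through A B C D) (hli : LinearIndependent ℝ ![f₁, f₂]) :
    ∃ α β : ℝ, α • f₁ + β • f₂ = f := by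
  have hspan : Submodule.span ℝ (Set.range ![f₁, f₂]) = LinearMap.ker (evalFour A B C D) := by
    apply Submodule.eq_of_le_of_finrank_eq
    · rw [Submodule.span_le, Matrix.range_cons_cons_empty]
      exact Set.insert_subset_iff.2
        ⟨mem_ker_evalFour.2 h₁, Set.singleton_subset_iff.2 (mem_ker_evalFour.2 h₂)⟩
    · rw [finrank_span_eq_card hli, finrank_ker_evalFour h, Fintype.card_fin]
  obtain ⟨c, hc⟩ :=
    (Submodule.mem_span_range_iff_exists_fun ℝ).1 (hspan ▸ mem_ker_evalFour.2 hf)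
  exact ⟨c 0, c 1, by simpa [Fin.sum_univ_two] using hc⟩

theorem exists_eval_add_smul (f : Conic) (M u : ℝ × ℝ) :
    ∃ a b : ℝ, ∀ t : ℝ, f.eval (M + t • u) = a * t ^ 2 + b * t + f.eval M :=
  ⟨f.a * u.1 ^ 2 + f.b * u.1 * u.2 + f.c * u.2 ^ 2,
    2 * f.a * M.1 * u.1 + f.b * (M.1 * u.2 + M.2 * u.1) + 2 * f.c * M.2 * u.2 + f.d * u.1 +
      f.e * u.2,
    fun t => by simp only [eval, Prod.fst_add, Prod.snd_add, Prod.smul_fst, Prod.smul_snd,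
      smul_eq_mul]; ring⟩

theorem exists_eval_line_of_inter_eq_pair {f : Conic} {M u P Q : ℝ × ℝ} (hPQ : P ≠ Q)
    (hM : M = midpoint ℝ P Q) (hℓ : {p ∈ parmLine M u | f.eval p = 0} = {P, Q}) :
    ∃ a r : ℝ, a ≠ 0 ∧ P = M + r • u ∧ Q = M - r • u ∧
      ∀ t : ℝ, f.eval (M + t • u) = a * (t ^ 2 - r ^ 2) := by
  have hMP : M ≠ P := fun h => hPQ ((left_eq_midpoint_iff ℝ).1 (h ▸ hM))
  have hMQ : M ≠ Q := fun h => hPQ ((right_eq_midpoint_iff ℝ).1 (h ▸ hM))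
  have hP : P ∈ {p ∈ parmLine M u | f.eval p = 0} := hℓ ▸ Set.mem_insert P {Q}
  have hQ : Q ∈ {p ∈ parmLine M u | f.eval p = 0} := hℓ ▸ Set.mem_insert_of_mem P rfl
  obtain ⟨⟨r, rfl⟩, hPf⟩ := hP
  have hQr : Q = M - r • u := by
    rw [← midpoint_eq_iff.1 hM.symm, AffineEquiv.pointReflection_apply, vsub_eq_sub,
      vadd_eq_add]
    abel
  have hr : r ≠ 0 := by rintro rfl; simp at hMP
  obtain ⟨a, b, h⟩ := exists_eval_add_smul f M u
  have hplus := h r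
  have hminus := h (-r)
  rw [hPf] at hplus
  rw [neg_smul, ← sub_eq_add_neg, ← hQr, hQ.2] at hminus
  have hb : b = 0 := by
    have : 2 * r * b = 0 := by linear_combination hminus - hplus
    simpa [hr] using this
  have ha : a ≠ 0 := by
    rintro rfl
    have hM0 : M ∈ {p ∈ parmLine M u | f.eval p = 0} :=
      ⟨⟨0, by simp⟩, by linear_combination -hplus - r * hb⟩
    rw [hℓ] at hM0
    rcases hM0 with h0 | h0
    exacts [hMP h0, hMQ h0]
  refine ⟨a, r, ha, rfl, hQr, fun t => ?_⟩
  rw [h t, hb]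
  linear_combination -hplus - r * hb

theorem smul_add_smul_eq_zero_of_eval_line {f₁ f₂ : Conic} {M u : ℝ × ℝ} {a₁ a₂ r₁ r₂ : ℝ}
    (ha₁ : a₁ ≠ 0) (ha₂ : a₂ ≠ 0) (hr : r₁ ^ 2 ≠ r₂ ^ 2)
    (h₁ : ∀ t : ℝ, f₁.eval (M + t • u) = a₁ * (t ^ 2 - r₁ ^ 2))
    (h₂ : ∀ t : ℝ, f₂.eval (M + t • u) = a₂ * (t ^ 2 - r₂ ^ 2)) {α β : ℝ}
    (h : ∀ t : ℝ, (α • f₁ + β • f₂).eval (M + t • u) = 0) : α = 0 ∧ β = 0 := by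
  have h0 := h 0
  have h1 := h 1
  simp only [eval_add, eval_smul, h₁, h₂] at h0 h1
  have hα : α * a₁ * (r₁ ^ 2 - r₂ ^ 2) = 0 := by
    linear_combination (r₂ ^ 2 - 1) * h0 - r₂ ^ 2 * h1
  have hα : α = 0 := by simpa [ha₁, sub_eq_zero, hr] using hα
  subst hα
  have hβ : β * a₂ = 0 := by linear_combination h1 - h0
  simpa [ha₂] using hβ

end Conic

theorem symm_pair_eq_of_sq_eq {M u : ℝ × ℝ} {r s : ℝ} (h : r ^ 2 = s ^ 2) :
    ({M + r • u, M - r • u} : Set (ℝ × ℝ)) = {M + s • u, M - s • u} := by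
  rcases sq_eq_sq_iff_eq_or_eq_neg.1 h with rfl | rfl
  · rfl
  · rw [Set.pair_comm, neg_smul, sub_neg_eq_add, ← sub_eq_add_neg]

theorem setOf_parmLine_eq_empty_or_singleton_or_pair {φ : ℝ × ℝ → ℝ} {M u : ℝ × ℝ} (hu : u ≠ 0) {a c : ℝ}
    (hac : a ≠ 0 ∨ c ≠ 0) (h : ∀ t : ℝ, φ (M + t • u) = a * t ^ 2 + c) :
    {p ∈ parmLine M u | φ p = 0} = ∅ ∨ {p ∈ parmLine M u | φ p = 0} = {M} ∨
      ∃ X Y : ℝ × ℝ, X ≠ Y ∧ M = midpoint ℝ X Y ∧ {p ∈ parmLine M u | φ p = 0} = {X, Y} := by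
  by_cases hroot : ∃ s : ℝ, a * s ^ 2 + c = 0
  swap
  · left
    refine Set.eq_empty_of_forall_notMem ?_
    rintro _ ⟨⟨t, rfl⟩, ht⟩
    exact hroot ⟨t, h t ▸ ht⟩
  obtain ⟨s, hs⟩ := hroot
  have ha : a ≠ 0 := by
    rintro rfl
    exact hac.elim (· rfl) (· (by simpa using hs))
  have hinter : {p ∈ parmLine M u | φ p = 0} = {M + s • u, M - s • u} := by
    ext p
    constructor
    · rintro ⟨⟨t, rfl⟩, ht⟩
      have hts : t ^ 2 = s ^ 2 := by
        apply mul_left_cancel₀ ha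
        linear_combination ht - h t - hs
      rcases sq_eq_sq_iff_eq_or_eq_neg.1 hts with rfl | rfl
      · exact Or.inl rfl
      · exact Or.inr (by simp [sub_eq_add_neg])
    · rintro (rfl | rfl)
      · exact ⟨⟨s, rfl⟩, by rw [h, hs]⟩
      · refine ⟨⟨-s, by rw [neg_smul, sub_eq_add_neg]⟩, ?_⟩
        rw [sub_eq_add_neg, ← neg_smul, h, neg_sq, hs]
  rcases eq_or_ne s 0 with rfl | hs0
  · right; left
    simpa using hinter
  · right; right
    refine ⟨M + s • u, M - s • u, fun hXY => hs0 ?_, (midpoint_add_sub ℝ M (s • u)).symm,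
      hinter⟩
    have : (2 * s) • u = 0 := by linear_combination (norm := module) hXY
    simpa [hu] using this

theorem klamkin_butterfly_general
    (A B C D : ℝ × ℝ) (hgen : NoThreeCollinear A B C D)
    (u : ℝ × ℝ) (hu : u ≠ 0) (M : ℝ × ℝ)
    (f₁ : Conic) (hf₁ : f₁.Through A B C D)
    (P Q : ℝ × ℝ) (hPQ : P ≠ Q) (hMPQ : M = midpoint ℝ P Q)
    (hf₁ℓ : {p ∈ parmLine M u | f₁.eval p = 0} = {P, Q})
    (f₂ : Conic) (hf₂ : f₂.Through A B C D)
    (S T : ℝ × ℝ) (hST : S ≠ T) (hMST : M = midpoint ℝ S T)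
    (hf₂ℓ : {p ∈ parmLine M u | f₂.eval p = 0} = {S, T})
    (hdiff : ({P, Q} : Set (ℝ × ℝ)) ≠ {S, T}) :
    ∀ f : Conic, f.Nonzero → f.Through A B C D →
      {p ∈ parmLine M u | f.eval p = 0} = ∅ ∨
      {p ∈ parmLine M u | f.eval p = 0} = {M} ∨
      ∃ X Y : ℝ × ℝ, X ≠ Y ∧ M = midpoint ℝ X Y ∧
        {p ∈ parmLine M u | f.eval p = 0} = {X, Y} := by
  intro f hf0 hf
  obtain ⟨a₁, r₁, ha₁, rfl, rfl, h₁⟩ := Conic.exists_eval_line_of_inter_eq_pair hPQ hMPQ hf₁ℓ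
  obtain ⟨a₂, r₂, ha₂, rfl, rfl, h₂⟩ := Conic.exists_eval_line_of_inter_eq_pair hST hMST hf₂ℓ
  have hr : r₁ ^ 2 ≠ r₂ ^ 2 := fun h => hdiff (symm_pair_eq_of_sq_eq h)
  have hcoeff := fun α β =>
    Conic.smul_add_smul_eq_zero_of_eval_line (α := α) (β := β) ha₁ ha₂ hr h₁ h₂
  have hli : LinearIndependent ℝ ![f₁, f₂] :=
    LinearIndependent.pair_iff.2 fun α β h => hcoeff α β fun t => by simp [h]
  obtain ⟨α, β, rfl⟩ := Conic.exists_smul_add_smul_eq_of_through hgen hf₁ hf₂ hf hli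
  have hline (t : ℝ) : (α • f₁ + β • f₂).eval (M + t • u) =
      (α * a₁ + β * a₂) * t ^ 2 + -(α * a₁ * r₁ ^ 2 + β * a₂ * r₂ ^ 2) := by
    simp only [Conic.eval_add, Conic.eval_smul, h₁, h₂]; ring
  refine setOf_parmLine_eq_empty_or_singleton_or_pair hu ?_ hline
  by_contra! hzero
  obtain ⟨rfl, rfl⟩ := hcoeff α β fun t => by rw [hline, hzero.1, hzero.2]; ring
  exact Conic.nonzero_iff_ne_zero.1 hf0 (by simp)

/-- **Klamkin's extension of the butterfly theorem.** If two conics through the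
four base points cut the line `ℓ` in two different pairs of distinct points with
the same midpoint `M`, then every conic through the four base points meets `ℓ`
either not at all, or exactly at `M`, or exactly in a pair of distinct points
with midpoint `M`. -/
theorem klamkin_butterfly
    (A B C D : ℝ × ℝ) (hgen : NoThreeCollinear A B C D)
    (u : ℝ × ℝ) (hu : u ≠ 0) (M : ℝ × ℝ)
    (hA : A ∉ parmLine M u) (hB : B ∉ parmLine M u)
    (hC : C ∉ parmLine M u) (hD : D ∉ parmLine M u)
    (f₁ : Conic) (hf₁0 : f₁.Nonzero) (hf₁ : f₁.Through A B C D)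
    (P Q : ℝ × ℝ) (hPQ : P ≠ Q) (hMPQ : M = midpoint ℝ P Q)
    (hf₁ℓ : {p ∈ parmLine M u | f₁.eval p = 0} = {P, Q})
    (f₂ : Conic) (hf₂0 : f₂.Nonzero) (hf₂ : f₂.Through A B C D)
    (S T : ℝ × ℝ) (hST : S ≠ T) (hMST : M = midpoint ℝ S T)
    (hf₂ℓ : {p ∈ parmLine M u | f₂.eval p = 0} = {S, T})
    (hdiff : ({P, Q} : Set (ℝ × ℝ)) ≠ {S, T}) :
    ∀ f : Conic, f.Nonzero → f.Through A B C D →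
      {p ∈ parmLine M u | f.eval p = 0} = ∅ ∨
      {p ∈ parmLine M u | f.eval p = 0} = {M} ∨
      ∃ X Y : ℝ × ℝ, X ≠ Y ∧ M = midpoint ℝ X Y ∧
        {p ∈ parmLine M u | f.eval p = 0} = {X, Y} :=
  klamkin_butterfly_general A B C D hgen u hu M f₁ hf₁ P Q hPQ hMPQ hf₁ℓ f₂ hf₂ S T hST hMST hf₂ℓ
    hdiff
end

section
/- Let S be a circle in the Euclidean plane ℝ² with center O and radius r > 0. Let P, Q ∈ S with P ≠ Q and let M = (P + Q)/2. Let A, B, C, D ∈ S be pairwise distinct points, each distinct from P and from Q, such that M lies on the line through A and B and on the line through C and D, and these two lines are distinct. Suppose X is a point lying on both the line through A and D and the line through P and Q, and Y is a point lying on both the line through B and C and the line through P and Q. Then M = (X + Y)/2. -/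
/-!
Put the origin at `M` and write `e = M - O`, `E = ‖e‖² - r²` (the power of `M`, negative because
`M` is the midpoint of the chord `PQ`, which also gives `e ⊥ Q - P`). The chord `AB` through `M`
is `M + a • v, M + b • v` with `a, b` the roots of `t² ‖v‖² + 2 t ⟪e, v⟫ + E = 0`, so
`1/a + 1/b = -2 ⟪e, v⟫ / E`, and likewise `CD` is `M + c • w, M + d • w`. For `X = M + x • u`
with `u = Q - P`, collinearity of `A, X, D` reads `ω v w / x = ω u w / a - ω u v / d` for the area
form `ω`, and similarly for `Y` with `b, c`. Hence `ω v w (1/x + 1/y)` is a multiple of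
`ω u w ⟪e, v⟫ - ω u v ⟪e, w⟫`, which vanishes in the plane since `e ⊥ u`.
-/

open Module
open scoped RealInnerProductSpace EuclideanSpace

section Affine

variable {k V : Type*} [Ring k] [AddCommGroup V] [Module k V]

theorem exists_eq_add_smul_of_mem_affineSpan_pair {A B M X : V}
    (hM : M ∈ line[k, A, B]) (hX : X ∈ line[k, A, B]) : ∃ x : k, X = M + x • (B - A) := by
  have h := AffineSubspace.vsub_mem_direction hX hM
  rw [direction_affineSpan, vectorSpan_pair_rev, Submodule.mem_span_singleton] at h
  obtain ⟨x, hx⟩ := h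
  exact ⟨x, eq_add_of_sub_eq' (by simpa using hx.symm)⟩

end Affine

section Chord

variable {V : Type*} [NormedAddCommGroup V] [InnerProductSpace ℝ V]

theorem chord_vieta {O m v A B : V} {r a b : ℝ} (hA : A = m + a • v) (hB : B = m + b • v)
    (hAB : A ≠ B) (hAs : A ∈ Metric.sphere O r) (hBs : B ∈ Metric.sphere O r) :
    (a + b) * ‖v‖ ^ 2 = -2 * ⟪m - O, v⟫ ∧ a * b * ‖v‖ ^ 2 = ‖m - O‖ ^ 2 - r ^ 2 := by
  have quadratic : ∀ t : ℝ, m + t • v ∈ Metric.sphere O r →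
      t ^ 2 * ‖v‖ ^ 2 + 2 * t * ⟪m - O, v⟫ + ‖m - O‖ ^ 2 - r ^ 2 = 0 := by
    intro t ht
    rw [mem_sphere_iff_norm, show m + t • v - O = (m - O) + t • v by abel] at ht
    have := norm_add_sq_real (m - O) (t • v)
    rw [ht, norm_smul, inner_smul_right, Real.norm_eq_abs, mul_pow, sq_abs] at this
    linear_combination -this
  have hab : a - b ≠ 0 := sub_ne_zero.mpr fun h => hAB (by rw [hA, hB, h])
  have hsum : (a + b) * ‖v‖ ^ 2 = -2 * ⟪m - O, v⟫ := by
    refine mul_left_cancel₀ hab ?_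
    linear_combination quadratic a (hA ▸ hAs) - quadratic b (hB ▸ hBs)
  exact ⟨hsum, by linear_combination -quadratic a (hA ▸ hAs) + a * hsum⟩

theorem chord_vieta_midpoint {O P Q : V} {r : ℝ} (hPQ : P ≠ Q)
    (hP : P ∈ Metric.sphere O r) (hQ : Q ∈ Metric.sphere O r) :
    ⟪midpoint ℝ P Q - O, Q - P⟫ = 0 ∧
      ‖midpoint ℝ P Q - O‖ ^ 2 - r ^ 2 = -(‖Q - P‖ ^ 2 / 4) := by
  obtain ⟨hsum, hprod⟩ := chord_vieta (m := midpoint ℝ P Q) (v := Q - P)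
    (a := -1 / 2) (b := 1 / 2)
    (by rw [midpoint_eq_smul_add, invOf_eq_inv]; module)
    (by rw [midpoint_eq_smul_add, invOf_eq_inv]; module) hPQ hP hQ
  exact ⟨by linarith, by linarith⟩

end Chord

section Oriented

variable {V : Type*} [NormedAddCommGroup V] [InnerProductSpace ℝ V] [Fact (finrank ℝ V = 2)]
  (o : Orientation ℝ V (Fin 2))

local notation "ω" => o.areaForm

namespace Orientation

theorem exists_unit_smul_eq_of_areaForm_eq_zero {v w : V} (hv : v ≠ 0) (hw : w ≠ 0)
    (h : ω v w = 0) : ∃ z : ℝˣ, z • v = w := by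
  have hsq := o.inner_sq_add_areaForm_sq v w
  rw [h] at hsq
  have habs : ‖⟪v, w⟫‖ = ‖v‖ * ‖w‖ := by
    rw [Real.norm_eq_abs, ← sq_eq_sq₀ (abs_nonneg _) (by positivity), sq_abs, mul_pow]
    linarith
  obtain ⟨c, hc, rfl⟩ := (norm_inner_eq_norm_iff hv hw).mp habs
  exact ⟨Units.mk0 c hc, rfl⟩

theorem affineSpan_pair_eq_of_areaForm_eq_zero {A B C D M : V} (hAB : A ≠ B) (hCD : C ≠ D)
    (hMAB : M ∈ line[ℝ, A, B]) (hMCD : M ∈ line[ℝ, C, D]) (h : ω (B - A) (D - C) = 0) :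
    line[ℝ, A, B] = line[ℝ, C, D] := by
  have hpar : (line[ℝ, A, B]).Parallel line[ℝ, C, D] :=
    AffineSubspace.affineSpan_pair_parallel_iff_exists_unit_smul'.mpr
      (o.exists_unit_smul_eq_of_areaForm_eq_zero (sub_ne_zero.mpr hAB.symm)
        (sub_ne_zero.mpr hCD.symm) h)
  exact AffineSubspace.ext_of_direction_eq hpar.direction_eq ⟨M, hMAB, hMCD⟩

theorem mul_areaForm_eq_of_mem_affineSpan_pair {m u v w A D X : V} {a d x : ℝ}
    (hA : A = m + a • v) (hD : D = m + d • w) (hX : X = m + x • u)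
    (h : X ∈ line[ℝ, A, D]) : x * (d * ω u w - a * ω u v) = a * d * ω v w := by
  obtain ⟨s, hs⟩ := exists_eq_add_smul_of_mem_affineSpan_pair (left_mem_affineSpan_pair ℝ A D) h
  subst hA hD hX
  have hcol : ω (x • u - a • v) (d • w - a • v) = 0 := by
    rw [show x • u - a • v = s • (d • w - a • v) by linear_combination (norm := module) hs,
      map_smul, LinearMap.smul_apply, o.areaForm_apply_self, smul_zero]
  simp only [map_sub, map_smul, LinearMap.sub_apply, LinearMap.smul_apply, smul_eq_mul,
    o.areaForm_apply_self] at hcol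
  linear_combination hcol

theorem areaForm_mul_inner_eq_of_inner_eq_zero {e u : V} (h : ⟪e, u⟫ = 0) (v w : V) :
    ω u w * ⟪e, v⟫ = ω u v * ⟪e, w⟫ := by
  rcases eq_or_ne e 0 with rfl | he
  · simp
  have hv := o.inner_mul_areaForm_sub e u v
  have hw := o.inner_mul_areaForm_sub e u w
  rw [h] at hv hw
  refine mul_left_cancel₀ (pow_ne_zero 2 (norm_ne_zero_iff.mpr he)) ?_
  linear_combination ⟪e, w⟫ * hv - ⟪e, v⟫ * hw

theorem butterfly_add_eq_zero {e u v w : V} {a b c d x y E : ℝ} (hE : E ≠ 0)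
    (hvw : ω v w ≠ 0) (heu : ⟪e, u⟫ = 0)
    (hab : (a + b) * ‖v‖ ^ 2 = -2 * ⟪e, v⟫) (habE : a * b * ‖v‖ ^ 2 = E)
    (hcd : (c + d) * ‖w‖ ^ 2 = -2 * ⟪e, w⟫) (hcdE : c * d * ‖w‖ ^ 2 = E)
    (hx : x * (d * ω u w - a * ω u v) = a * d * ω v w)
    (hy : y * (c * ω u w - b * ω u v) = b * c * ω v w) :
    x + y = 0 := by
  have hv : ‖v‖ ^ 2 ≠ 0 := right_ne_zero_of_mul (habE ▸ hE)
  have hw : ‖w‖ ^ 2 ≠ 0 := right_ne_zero_of_mul (hcdE ▸ hE)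
  have hab0 : a * b ≠ 0 := left_ne_zero_of_mul (habE ▸ hE)
  have hcd0 : c * d ≠ 0 := left_ne_zero_of_mul (hcdE ▸ hE)
  have horth := o.areaForm_mul_inner_eq_of_inner_eq_zero heu v w
  have key : c * d * (a + b) * ω u w - a * b * (c + d) * ω u v = 0 := by
    refine mul_left_cancel₀ (mul_ne_zero hv hw) ?_
    linear_combination (a + b) * ‖v‖ ^ 2 * ω u w * hcdE + E * ω u w * hab
      - (c + d) * ‖w‖ ^ 2 * ω u v * habE - E * ω u v * hcd - 2 * E * horth
  have hDx : d * ω u w - a * ω u v ≠ 0 := fun h => by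
    rw [h, mul_zero] at hx
    exact mul_ne_zero (mul_ne_zero (left_ne_zero_of_mul hab0) (right_ne_zero_of_mul hcd0)) hvw
      hx.symm
  have hDy : c * ω u w - b * ω u v ≠ 0 := fun h => by
    rw [h, mul_zero] at hy
    exact mul_ne_zero (mul_ne_zero (right_ne_zero_of_mul hab0) (left_ne_zero_of_mul hcd0)) hvw
      hy.symm
  refine (mul_eq_zero.mp ?_).resolve_right (mul_ne_zero hDx hDy)
  linear_combination (c * ω u w - b * ω u v) * hx + (d * ω u w - a * ω u v) * hy + ω v w * key

end Orientation

end Oriented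

theorem butterfly_theorem_general
    (O : EuclideanSpace ℝ (Fin 2)) (r : ℝ)
    (P Q : EuclideanSpace ℝ (Fin 2))
    (hP : P ∈ Metric.sphere O r) (hQ : Q ∈ Metric.sphere O r) (hPQ : P ≠ Q)
    (M : EuclideanSpace ℝ (Fin 2)) (hM : M = midpoint ℝ P Q)
    (A B C D : EuclideanSpace ℝ (Fin 2))
    (hA : A ∈ Metric.sphere O r) (hB : B ∈ Metric.sphere O r)
    (hC : C ∈ Metric.sphere O r) (hD : D ∈ Metric.sphere O r)
    (hAB : A ≠ B) (hCD : C ≠ D)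
    (hMAB : M ∈ affineSpan ℝ ({A, B} : Set (EuclideanSpace ℝ (Fin 2))))
    (hMCD : M ∈ affineSpan ℝ ({C, D} : Set (EuclideanSpace ℝ (Fin 2))))
    (hlines : affineSpan ℝ ({A, B} : Set (EuclideanSpace ℝ (Fin 2))) ≠
      affineSpan ℝ ({C, D} : Set (EuclideanSpace ℝ (Fin 2))))
    (X Y : EuclideanSpace ℝ (Fin 2))
    (hXAD : X ∈ affineSpan ℝ ({A, D} : Set (EuclideanSpace ℝ (Fin 2))))
    (hXPQ : X ∈ affineSpan ℝ ({P, Q} : Set (EuclideanSpace ℝ (Fin 2))))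
    (hYBC : Y ∈ affineSpan ℝ ({B, C} : Set (EuclideanSpace ℝ (Fin 2))))
    (hYPQ : Y ∈ affineSpan ℝ ({P, Q} : Set (EuclideanSpace ℝ (Fin 2)))) :
    M = midpoint ℝ X Y := by
  let o : Orientation ℝ (EuclideanSpace ℝ (Fin 2)) (Fin 2) :=
    (EuclideanSpace.basisFun (Fin 2) ℝ).toBasis.orientation
  have hMPQ : M ∈ line[ℝ, P, Q] := hM ▸ AffineMap.lineMap_mem_affineSpan_pair _ _ _
  obtain ⟨a, hA'⟩ :=
    exists_eq_add_smul_of_mem_affineSpan_pair hMAB (left_mem_affineSpan_pair ℝ A B)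
  obtain ⟨b, hB'⟩ :=
    exists_eq_add_smul_of_mem_affineSpan_pair hMAB (right_mem_affineSpan_pair ℝ A B)
  obtain ⟨c, hC'⟩ :=
    exists_eq_add_smul_of_mem_affineSpan_pair hMCD (left_mem_affineSpan_pair ℝ C D)
  obtain ⟨d, hD'⟩ :=
    exists_eq_add_smul_of_mem_affineSpan_pair hMCD (right_mem_affineSpan_pair ℝ C D)
  obtain ⟨x, hX⟩ := exists_eq_add_smul_of_mem_affineSpan_pair hMPQ hXPQ
  obtain ⟨y, hY⟩ := exists_eq_add_smul_of_mem_affineSpan_pair hMPQ hYPQ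
  obtain ⟨hsumAB, hprodAB⟩ := chord_vieta hA' hB' hAB hA hB
  obtain ⟨hsumCD, hprodCD⟩ := chord_vieta hC' hD' hCD hC hD
  obtain ⟨hperp, hpower⟩ := hM ▸ chord_vieta_midpoint hPQ hP hQ
  have hE : ‖M - O‖ ^ 2 - r ^ 2 ≠ 0 := by
    rw [hpower, neg_ne_zero]
    exact div_ne_zero (pow_ne_zero 2 (norm_ne_zero_iff.mpr (sub_ne_zero.mpr hPQ.symm)))
      four_ne_zero
  have hxy : x + y = 0 := o.butterfly_add_eq_zero hE
    (fun h => hlines (o.affineSpan_pair_eq_of_areaForm_eq_zero hAB hCD hMAB hMCD h)) hperp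
    hsumAB hprodAB hsumCD hprodCD
    (o.mul_areaForm_eq_of_mem_affineSpan_pair hA' hD' hX hXAD)
    (o.mul_areaForm_eq_of_mem_affineSpan_pair hB' hC' hY hYBC)
  rw [hX, hY, eq_neg_of_add_eq_zero_right hxy, midpoint_eq_smul_add, invOf_eq_inv]
  module

/-- **The classical butterfly theorem.** Let `PQ` be a chord of a circle with
midpoint `M`, let `AB` and `CD` be two other chords through `M`, and let the
lines `AD` and `BC` cut the line `PQ` in points `X` and `Y`. Then `M` is the
midpoint of `X` and `Y`. -/
theorem butterfly_theorem
    (O : EuclideanSpace ℝ (Fin 2)) (r : ℝ) (hr : 0 < r)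
    (P Q : EuclideanSpace ℝ (Fin 2))
    (hP : P ∈ Metric.sphere O r) (hQ : Q ∈ Metric.sphere O r) (hPQ : P ≠ Q)
    (M : EuclideanSpace ℝ (Fin 2)) (hM : M = midpoint ℝ P Q)
    (A B C D : EuclideanSpace ℝ (Fin 2))
    (hA : A ∈ Metric.sphere O r) (hB : B ∈ Metric.sphere O r)
    (hC : C ∈ Metric.sphere O r) (hD : D ∈ Metric.sphere O r)
    (hAB : A ≠ B) (hAC : A ≠ C) (hAD : A ≠ D)
    (hBC : B ≠ C) (hBD : B ≠ D) (hCD : C ≠ D)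
    (hAP : A ≠ P) (hAQ : A ≠ Q) (hBP : B ≠ P) (hBQ : B ≠ Q)
    (hCP : C ≠ P) (hCQ : C ≠ Q) (hDP : D ≠ P) (hDQ : D ≠ Q)
    (hMAB : M ∈ affineSpan ℝ ({A, B} : Set (EuclideanSpace ℝ (Fin 2))))
    (hMCD : M ∈ affineSpan ℝ ({C, D} : Set (EuclideanSpace ℝ (Fin 2))))
    (hlines : affineSpan ℝ ({A, B} : Set (EuclideanSpace ℝ (Fin 2))) ≠
      affineSpan ℝ ({C, D} : Set (EuclideanSpace ℝ (Fin 2))))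
    (X Y : EuclideanSpace ℝ (Fin 2))
    (hXAD : X ∈ affineSpan ℝ ({A, D} : Set (EuclideanSpace ℝ (Fin 2))))
    (hXPQ : X ∈ affineSpan ℝ ({P, Q} : Set (EuclideanSpace ℝ (Fin 2))))
    (hYBC : Y ∈ affineSpan ℝ ({B, C} : Set (EuclideanSpace ℝ (Fin 2))))
    (hYPQ : Y ∈ affineSpan ℝ ({P, Q} : Set (EuclideanSpace ℝ (Fin 2)))) :
    M = midpoint ℝ X Y :=
  butterfly_theorem_general O r P Q hP hQ hPQ M hM A B C D hA hB hC hD hAB hCD hMAB hMCD hlines X Y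
    hXAD hXPQ hYBC hYPQ
end
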